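/- arXiv:1508.04645 — 9 statements merged into one kernel-verified Lean document; each statement's English description precedes it below -/
import Mathlib

section
/- Let m ≥ 2. Then for every i ∈ [m]: E[ Σ_{j=1}^i p_{π(j)} ] = i/m, and E[ ( Σ_{j=1}^i p_{π(j)} − i/m )² ] = (i/m) σ(p)² + ( i(i−1)/(m(m−1)) ) (1 − σ(p)²) − i²/m², and this quantity is at most (i/m) σ(p)². -/
/-!
Reindexing the sum over permutations by a transposition shows that for a uniform random
permutation `σ`, each `σ j` is uniform, and `σ k` is uniform on the points other than `σ j` when
`k ≠ j`. Hence `E[f (σ j)]` is the mean of `f`, and `E[f (σ j) g (σ k)]` is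
`((∑ f)(∑ g) - ∑ f g) / (m (m - 1))`; expanding the square of `∑_{j < i} p (σ j)` gives the
second moment. The bound follows from `1 - σ(p)² ≤ 1 - 1/m`, which is Cauchy–Schwarz
`1 = (∑ p)² ≤ m σ(p)²`.
-/

open Finset

namespace Equiv.Perm

variable {α : Type*} [Fintype α] [DecidableEq α]

section AddCommMonoid

variable {M : Type*} [AddCommMonoid M]

theorem sum_apply_eq (f : α → M) (a b : α) :
    ∑ σ : Perm α, f (σ a) = ∑ σ : Perm α, f (σ b) := by
  rw [← Equiv.sum_comp (Equiv.mulRight (swap a b))]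
  simp [mul_apply]

theorem card_smul_sum_apply (f : α → M) (a : α) :
    Fintype.card α • ∑ σ : Perm α, f (σ a) = Fintype.card (Perm α) • ∑ x, f x :=
  calc Fintype.card α • ∑ σ : Perm α, f (σ a)
      = ∑ b, ∑ σ : Perm α, f (σ b) := by simp [sum_apply_eq f _ a]
    _ = ∑ σ : Perm α, ∑ b, f (σ b) := sum_comm
    _ = Fintype.card (Perm α) • ∑ x, f x := by simp [Equiv.sum_comp]

theorem sum_apply_apply_eq (f : α → α → M) {a b c : α} (hb : b ≠ a) (hc : c ≠ a) :
    ∑ σ : Perm α, f (σ a) (σ b) = ∑ σ : Perm α, f (σ a) (σ c) := by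
  rw [← Equiv.sum_comp (Equiv.mulRight (swap b c))]
  simp [mul_apply, swap_apply_of_ne_of_ne hb.symm hc.symm]

end AddCommMonoid

theorem card_sub_one_mul_sum_apply_mul_apply {R : Type*} [CommRing R] (f g : α → R)
    {a b : α} (hab : a ≠ b) :
    ((Fintype.card α : R) - 1) * ∑ σ : Perm α, f (σ a) * g (σ b)
      = (∑ σ : Perm α, f (σ a)) * ∑ x, g x - ∑ σ : Perm α, f (σ a) * g (σ a) :=
  calc ((Fintype.card α : R) - 1) * ∑ σ : Perm α, f (σ a) * g (σ b)
      = ∑ c ∈ univ.erase a, ∑ σ : Perm α, f (σ a) * g (σ c) := by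
        symm
        rw [sum_congr rfl fun c hc ↦
          sum_apply_apply_eq (fun x y ↦ f x * g y) (ne_of_mem_erase hc) hab.symm, sum_const,
          card_erase_of_mem (mem_univ a), card_univ, nsmul_eq_mul,
          Nat.cast_pred (Fintype.card_pos_iff.2 ⟨a⟩)]
    _ = ∑ σ : Perm α, f (σ a) * (∑ x, g x - g (σ a)) := by
        rw [sum_comm]
        refine sum_congr rfl fun σ _ ↦ ?_
        rw [← mul_sum, sum_erase_eq_sub (mem_univ a), Equiv.sum_comp σ g]
    _ = _ := by simp only [mul_sub, sum_sub_distrib, sum_mul]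

section Field

variable {K : Type*} [Field K] [CharZero K]

theorem sum_apply_div_card (f : α → K) (a : α) :
    (∑ σ : Perm α, f (σ a)) / Fintype.card (Perm α) = (∑ x, f x) / Fintype.card α := by
  have := Nonempty.intro a
  have h := card_smul_sum_apply f a
  simp only [nsmul_eq_mul] at h
  rw [div_eq_div_iff (Nat.cast_ne_zero.2 Fintype.card_ne_zero)
    (Nat.cast_ne_zero.2 Fintype.card_ne_zero)]
  linear_combination h

theorem sum_apply_mul_apply_div_card (f g : α → K) {a b : α} (hab : a ≠ b) :
    (∑ σ : Perm α, f (σ a) * g (σ b)) / Fintype.card (Perm α)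
      = ((∑ x, f x) * (∑ x, g x) - ∑ x, f x * g x)
        / (Fintype.card α * (Fintype.card α - 1)) := by
  have : Nontrivial α := ⟨⟨a, b, hab⟩⟩
  have hn : (Fintype.card α : K) - 1 ≠ 0 :=
    sub_ne_zero.2 (by exact_mod_cast Fintype.one_lt_card.ne')
  have h := card_sub_one_mul_sum_apply_mul_apply f g hab
  have hf := sum_apply_div_card f a
  have hfg := sum_apply_div_card (fun x ↦ f x * g x) a
  have hN : (Fintype.card (Perm α) : K) ≠ 0 := Nat.cast_ne_zero.2 Fintype.card_ne_zero
  have hα : (Fintype.card α : K) ≠ 0 := Nat.cast_ne_zero.2 Fintype.card_ne_zero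
  rw [div_eq_div_iff hN hα] at hf hfg
  rw [div_eq_div_iff hN (mul_ne_zero hα hn)]
  linear_combination (Fintype.card α : K) * h + (∑ x, g x) * hf - hfg

theorem sum_sum_apply_div_card (s : Finset α) (f : α → K) :
    (∑ σ : Perm α, ∑ j ∈ s, f (σ j)) / Fintype.card (Perm α)
      = #s * (∑ x, f x) / Fintype.card α := by
  rw [sum_comm, sum_div, sum_congr rfl fun j _ ↦ sum_apply_div_card f j, sum_const,
    nsmul_eq_mul, mul_div_assoc]

theorem sum_sq_sum_apply_div_card (s : Finset α) (f : α → K) :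
    (∑ σ : Perm α, (∑ j ∈ s, f (σ j)) ^ 2) / Fintype.card (Perm α)
      = #s * ((∑ x, f x ^ 2) / Fintype.card α + (#s - 1) * ((∑ x, f x) ^ 2 - ∑ x, f x ^ 2)
        / (Fintype.card α * (Fintype.card α - 1))) :=
  calc (∑ σ : Perm α, (∑ j ∈ s, f (σ j)) ^ 2) / Fintype.card (Perm α)
      = ∑ j ∈ s, ∑ k ∈ s,
          (∑ σ : Perm α, f (σ j) * f (σ k)) / Fintype.card (Perm α) := by
        simp only [sq, sum_mul_sum, sum_div]
        rw [sum_comm]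
        exact sum_congr rfl fun j _ ↦ sum_comm
    _ = ∑ j ∈ s, ((∑ x, f x ^ 2) / Fintype.card α
          + (#s - 1) * ((∑ x, f x) ^ 2 - ∑ x, f x ^ 2)
            / (Fintype.card α * (Fintype.card α - 1))) := by
        refine sum_congr rfl fun j hj ↦ ?_
        rw [← add_sum_erase s _ hj, sum_congr rfl fun k hk ↦
          sum_apply_mul_apply_div_card f f (ne_of_mem_erase hk).symm, sum_const,
          card_erase_of_mem hj, nsmul_eq_mul, Nat.cast_pred (card_pos.2 ⟨j, hj⟩)]
        simp only [← sq, sum_apply_div_card (f · ^ 2) j]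
        ring
    _ = _ := by rw [sum_const, nsmul_eq_mul]

end Field

end Equiv.Perm

theorem Fintype.sum_sub_sq_div_card {ι K : Type*} [Fintype ι] [Nonempty ι] [Field K] [CharZero K]
    (X : ι → K) (c : K) :
    (∑ x, (X x - c) ^ 2) / Fintype.card ι
      = (∑ x, X x ^ 2) / Fintype.card ι - 2 * c * ((∑ x, X x) / Fintype.card ι) + c ^ 2 := by
  have : (Fintype.card ι : K) ≠ 0 := Nat.cast_ne_zero.2 Fintype.card_ne_zero
  simp only [sub_sq, sum_add_distrib, sum_sub_distrib, ← sum_mul, ← mul_sum, sum_const,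
    card_univ, nsmul_eq_mul]
  field_simp

theorem mul_sub_one_div_mul_sub_one_mul_one_sub_le {K : Type*} [Field K] [LinearOrder K]
    [IsStrictOrderedRing K] {i n q : K} (hi : 1 ≤ i) (hn : 1 < n) (hq : 1 ≤ n * q) :
    i * (i - 1) / (n * (n - 1)) * (1 - q) ≤ i ^ 2 / n ^ 2 := by
  have hn0 : 0 < n := by linarith
  have hq' : 1 - q ≤ (n - 1) / n := by
    rw [le_div_iff₀ hn0]
    linarith
  calc i * (i - 1) / (n * (n - 1)) * (1 - q)
      ≤ i * (i - 1) / (n * (n - 1)) * ((n - 1) / n) := by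
        gcongr
    _ = i * (i - 1) / n ^ 2 := by
        field_simp [(sub_pos.2 hn).ne']
    _ ≤ i ^ 2 / n ^ 2 := by
        gcongr
        linarith

theorem stmt3_general (m : ℕ) (hm : 2 ≤ m) (p : Fin m → ℝ)
    (hsum : ∑ v, p v = 1)
    (i : ℕ) (hi1 : 1 ≤ i) (him : i ≤ m) :
    (((∑ π : Equiv.Perm (Fin m),
        ∑ j ∈ Finset.univ.filter (fun j : Fin m => (j : ℕ) < i), p (π j)) /
        (Fintype.card (Equiv.Perm (Fin m)) : ℝ)) = (i : ℝ) / m) ∧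
    (((∑ π : Equiv.Perm (Fin m),
        ((∑ j ∈ Finset.univ.filter (fun j : Fin m => (j : ℕ) < i), p (π j)) - (i : ℝ) / m) ^ 2) /
        (Fintype.card (Equiv.Perm (Fin m)) : ℝ))
      = ((i : ℝ) / m) * (∑ v, (p v) ^ 2)
        + (((i : ℝ) * ((i : ℝ) - 1)) / ((m : ℝ) * ((m : ℝ) - 1))) * (1 - ∑ v, (p v) ^ 2)
        - (i : ℝ) ^ 2 / (m : ℝ) ^ 2) ∧
    (((∑ π : Equiv.Perm (Fin m),
        ((∑ j ∈ Finset.univ.filter (fun j : Fin m => (j : ℕ) < i), p (π j)) - (i : ℝ) / m) ^ 2) /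
        (Fintype.card (Equiv.Perm (Fin m)) : ℝ))
      ≤ ((i : ℝ) / m) * (∑ v, (p v) ^ 2)) := by
  set s := Finset.univ.filter (fun j : Fin m => (j : ℕ) < i)
  have hs : #s = i := by simp [s, Fin.card_filter_val_lt, him]
  have hmean := Equiv.Perm.sum_sum_apply_div_card s p
  rw [hs, hsum, Fintype.card_fin, mul_one] at hmean
  have hvar : (∑ π : Equiv.Perm (Fin m), (∑ j ∈ s, p (π j) - i / m) ^ 2)
      / Fintype.card (Equiv.Perm (Fin m))
      = i / m * ∑ v, p v ^ 2 + i * (i - 1) / (m * (m - 1)) * (1 - ∑ v, p v ^ 2)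
        - (i : ℝ) ^ 2 / (m : ℝ) ^ 2 := by
    rw [Fintype.sum_sub_sq_div_card, hmean, Equiv.Perm.sum_sq_sum_apply_div_card, hs, hsum,
      Fintype.card_fin]
    have : (m : ℝ) - 1 ≠ 0 := sub_ne_zero.2 (by norm_cast; omega)
    field_simp
    ring
  have hCS : 1 ≤ (m : ℝ) * ∑ v, p v ^ 2 := by
    simpa [hsum] using sq_sum_le_card_mul_sum_sq (s := univ) (f := p)
  refine ⟨hmean, hvar, ?_⟩
  rw [hvar]
  linarith [mul_sub_one_div_mul_sub_one_mul_one_sub_le (i := (i : ℝ)) (by exact_mod_cast hi1)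
    (by exact_mod_cast hm) hCS]

/-- Let `π` be a uniformly random permutation of `[m]`, `m ≥ 2`, and `p` a
probability mass function on `[m]`.  For `i ∈ [m]`, with `S(π) = Σ_{j=1}^i p_{π(j)}`:
`E[S] = i/m`; `E[(S − i/m)²] = (i/m)σ(p)² + (i(i−1)/(m(m−1)))(1 − σ(p)²) − i²/m²`; and this
quantity is at most `(i/m)σ(p)²`.  Expectations under the uniform distribution on permutations
are written as averages over all permutations. -/
theorem stmt3 (m : ℕ) (hm : 2 ≤ m) (p : Fin m → ℝ)
    (hp : ∀ v, 0 < p v) (hsum : ∑ v, p v = 1)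
    (i : ℕ) (hi1 : 1 ≤ i) (him : i ≤ m) :
    (((∑ π : Equiv.Perm (Fin m),
        ∑ j ∈ Finset.univ.filter (fun j : Fin m => (j : ℕ) < i), p (π j)) /
        (Fintype.card (Equiv.Perm (Fin m)) : ℝ)) = (i : ℝ) / m) ∧
    (((∑ π : Equiv.Perm (Fin m),
        ((∑ j ∈ Finset.univ.filter (fun j : Fin m => (j : ℕ) < i), p (π j)) - (i : ℝ) / m) ^ 2) /
        (Fintype.card (Equiv.Perm (Fin m)) : ℝ))
      = ((i : ℝ) / m) * (∑ v, (p v) ^ 2)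
        + (((i : ℝ) * ((i : ℝ) - 1)) / ((m : ℝ) * ((m : ℝ) - 1))) * (1 - ∑ v, (p v) ^ 2)
        - (i : ℝ) ^ 2 / (m : ℝ) ^ 2) ∧
    (((∑ π : Equiv.Perm (Fin m),
        ((∑ j ∈ Finset.univ.filter (fun j : Fin m => (j : ℕ) < i), p (π j)) - (i : ℝ) / m) ^ 2) /
        (Fintype.card (Equiv.Perm (Fin m)) : ℝ))
      ≤ ((i : ℝ) / m) * (∑ v, (p v) ^ 2)) :=
  stmt3_general m hm p hsum i hi1 him
end

section
/- Let m ≥ 2 and let (F_k)_{0 ≤ k ≤ m−1} be the filtration in which F_k is the σ-algebra generated by (π(1),…,π(k)) (with F_0 trivial). Define M_0 := 0 and M_k := ( Σ_{j=1}^k p_{π(j)} − k/m ) / (m−k) for 0 ≤ k ≤ m−1. Then (M_k)_{0 ≤ k ≤ m−1} is a martingale with respect to (F_k)_{0 ≤ k ≤ m−1}. -/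
open MeasureTheory

noncomputable instance permMS (m : ℕ) : MeasurableSpace (Equiv.Perm (Fin m)) := ⊤

/-- The filtration in which the `k`-th σ-algebra is generated by `π ↦ (π(1), …, π(k))`. -/
noncomputable def permFiltration (m : ℕ) : Filtration ℕ (permMS m) where
  seq k := ⨆ (j : Fin m) (_ : (j : ℕ) < k),
    MeasurableSpace.comap (fun π : Equiv.Perm (Fin m) => π j) (⊤ : MeasurableSpace (Fin m))
  mono' := fun a b hab =>
    iSup_mono fun j => iSup_le fun hj => le_iSup_of_le (lt_of_lt_of_le hj hab) le_rfl
  le' := fun _ => iSup_le fun _ => iSup_le fun _ => le_top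

/-!
Right multiplication by a permutation that fixes the positions `0, …, k - 1` preserves the uniform
measure and every event of `F_k`; composing with transpositions of positions `≥ k` shows that on an
event of `F_k` all the values `p (π j)`, `j ≥ k`, have the same integral. These values sum to
`1 - S_k`, where `S_k = ∑_{j<k} p (π j)`, so the conditional expectation of `p (π k)` given `F_k`
is `(1 - S_k) / (m - k)`. Substituting it into `M_{k+1} = (S_k + p (π k) - (k + 1)/m) / (m - k - 1)`
gives `M_k`. Positions are `0`-based: `π j` with `j < k` are the paper's `π(1), …, π(k)`.
-/

open Finset

section RightInvariance

variable {G : Type*} [Group G] [MeasurableSpace G]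

instance [Fintype G] [DiscreteMeasurableSpace G] :
    (PMF.uniformOfFintype G).toMeasure.IsMulRightInvariant where
  map_mul_right_eq_self g := Measure.ext_of_singleton fun x => by
    have hpre : (· * g) ⁻¹' {x} = {x * g⁻¹} := by
      ext y; simp [eq_mul_inv_iff_mul_eq]
    rw [Measure.map_apply (.of_discrete) (measurableSet_singleton x), hpre,
      PMF.toMeasure_apply_singleton _ _ (measurableSet_singleton _),
      PMF.toMeasure_apply_singleton _ _ (measurableSet_singleton _),
      PMF.uniformOfFintype_apply, PMF.uniformOfFintype_apply]

theorem setIntegral_comp_mul_right_of_preimage_eq [MeasurableMul G] (μ : Measure G)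
    [μ.IsMulRightInvariant] {E : Type*} [NormedAddCommGroup E] [NormedSpace ℝ E]
    (f : G → E) {g : G} {s : Set G} (hs : (· * g) ⁻¹' s = s) :
    ∫ x in s, f (x * g) ∂μ = ∫ x in s, f x ∂μ := by
  have h := (measurePreserving_mul_right μ g).setIntegral_preimage_emb
    (MeasurableEquiv.mulRight g).measurableEmbedding f s
  rwa [hs] at h

end RightInvariance

section PermFiltration

variable {m k : ℕ}

theorem measurable_apply_permFiltration {j : Fin m} (hj : (j : ℕ) < k) :
    Measurable[permFiltration m k] fun π : Equiv.Perm (Fin m) => π j :=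
  measurable_iff_comap_le.2 <| le_iSup₂_of_le (f := fun (j : Fin m) (_ : (j : ℕ) < k) =>
    MeasurableSpace.comap (fun π : Equiv.Perm (Fin m) => π j) ⊤) j hj le_rfl

theorem permFiltration_le_invariants_mul_right {τ : Equiv.Perm (Fin m)}
    (hτ : ∀ j : Fin m, (j : ℕ) < k → τ j = j) :
    permFiltration m k ≤ MeasurableSpace.invariants (· * τ) := by
  refine iSup₂_le fun j hj => ?_
  rintro _ ⟨A, -, rfl⟩
  exact ⟨trivial, by ext π; simp [hτ j hj]⟩

theorem setIntegral_apply_eq_of_le (μ : Measure (Equiv.Perm (Fin m))) [μ.IsMulRightInvariant]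
    {E : Type*} [NormedAddCommGroup E] [NormedSpace ℝ E] (f : Fin m → E)
    {s : Set (Equiv.Perm (Fin m))} (hs : MeasurableSet[permFiltration m k] s)
    {i j : Fin m} (hi : k ≤ i) (hj : k ≤ j) :
    ∫ π in s, f (π i) ∂μ = ∫ π in s, f (π j) ∂μ := by
  have hswap : ∀ l : Fin m, (l : ℕ) < k → Equiv.swap i j l = l := fun l hl =>
    Equiv.swap_apply_of_ne_of_ne (Fin.ne_of_lt (by omega)) (Fin.ne_of_lt (by omega))
  have h := setIntegral_comp_mul_right_of_preimage_eq μ (fun π => f (π i))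
    (permFiltration_le_invariants_mul_right hswap s hs).2
  simpa using h.symm

end PermFiltration

section PrefixSum

variable {m : ℕ} (p : Fin m → ℝ) (k : ℕ)

def prefixSum (π : Equiv.Perm (Fin m)) : ℝ :=
  ∑ j ∈ univ.filter (fun j : Fin m => (j : ℕ) < k), p (π j)

noncomputable def prefixMartingale (π : Equiv.Perm (Fin m)) : ℝ :=
  (prefixSum p k π - k / m) / (m - k)

theorem measurable_prefixSum : Measurable[permFiltration m k] (prefixSum p k) :=
  Finset.measurable_sum _ fun j hj =>
    (measurable_of_countable p).comp (measurable_apply_permFiltration (by simpa using hj))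

theorem measurable_prefixMartingale : Measurable[permFiltration m k] (prefixMartingale p k) :=
  ((measurable_prefixSum p k).sub_const _).div_const _

variable {p k}

theorem prefixSum_succ (hk : k < m) (π : Equiv.Perm (Fin m)) :
    prefixSum p (k + 1) π = prefixSum p k π + p (π ⟨k, hk⟩) := by
  have h : univ.filter (fun j : Fin m => (j : ℕ) < k + 1)
      = insert ⟨k, hk⟩ (univ.filter fun j : Fin m => (j : ℕ) < k) := by
    ext j; simp [Fin.ext_iff]; omega
  rw [prefixSum, h, sum_insert (by simp), add_comm]
  rfl

theorem sum_filter_not_lt_eq_one_sub_prefixSum (hsum : ∑ v, p v = 1) (π : Equiv.Perm (Fin m)) :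
    ∑ j ∈ univ.filter (fun j : Fin m => ¬ (j : ℕ) < k), p (π j) = 1 - prefixSum p k π := by
  have h := sum_filter_add_sum_filter_not univ (fun j : Fin m => (j : ℕ) < k) (fun j => p (π j))
  rw [Equiv.sum_comp π p, hsum] at h
  rw [prefixSum]
  linarith

end PrefixSum

theorem card_filter_not_val_lt {m : ℕ} (k : ℕ) :
    #(univ.filter fun j : Fin m => ¬ (j : ℕ) < k) = m - k := by
  have h := card_filter_add_card_filter_not (s := univ) (fun j : Fin m => (j : ℕ) < k)
  rw [Fin.card_filter_val_lt, card_univ, Fintype.card_fin] at h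
  omega

section MartingaleStep

variable {m k : ℕ} {p : Fin m → ℝ} (μ : Measure (Equiv.Perm (Fin m))) [IsFiniteMeasure μ]
  [μ.IsMulRightInvariant] {s : Set (Equiv.Perm (Fin m))}

theorem setIntegral_apply_eq_one_sub_prefixSum (hsum : ∑ v, p v = 1) (hk : k < m)
    (hs : MeasurableSet[permFiltration m k] s) :
    ∫ π in s, p (π ⟨k, hk⟩) ∂μ = ∫ π in s, (1 - prefixSum p k π) / (m - k) ∂μ := by
  have hmk : (m : ℝ) - k ≠ 0 := sub_ne_zero.2 (by exact_mod_cast hk.ne')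
  have hmass : ((m : ℝ) - k) * ∫ π in s, p (π ⟨k, hk⟩) ∂μ = ∫ π in s, (1 - prefixSum p k π) ∂μ :=
    calc ((m : ℝ) - k) * ∫ π in s, p (π ⟨k, hk⟩) ∂μ
        = ∑ j ∈ univ.filter (fun j : Fin m => ¬ (j : ℕ) < k), ∫ π in s, p (π j) ∂μ := by
          rw [sum_congr rfl fun j hj => setIntegral_apply_eq_of_le μ p hs (j := ⟨k, hk⟩)
            (by simpa using hj) le_rfl, sum_const, card_filter_not_val_lt, nsmul_eq_mul,
            Nat.cast_sub hk.le]
      _ = ∫ π in s, (1 - prefixSum p k π) ∂μ := by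
          rw [← integral_finsetSum _ fun _ _ => Integrable.of_finite]
          simp_rw [sum_filter_not_lt_eq_one_sub_prefixSum hsum]
  rw [integral_div, ← hmass, mul_div_cancel_left₀ _ hmk]

theorem setIntegral_prefixMartingale_succ (hsum : ∑ v, p v = 1) (hk : k + 1 < m)
    (hs : MeasurableSet[permFiltration m k] s) :
    ∫ π in s, prefixMartingale p (k + 1) π ∂μ = ∫ π in s, prefixMartingale p k π ∂μ := by
  have hk' : k < m := k.lt_succ_self.trans hk
  have hm : (m : ℝ) ≠ 0 := by exact_mod_cast (by omega : m ≠ 0)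
  have hmk : (m : ℝ) - k ≠ 0 := sub_ne_zero.2 (by exact_mod_cast hk'.ne')
  have hmk1 : (m : ℝ) - (k + 1) ≠ 0 := sub_ne_zero.2 (by exact_mod_cast hk.ne')
  have hsucc : ∀ π, prefixMartingale p (k + 1) π
      = (prefixSum p k π - (k + 1) / m) / (m - (k + 1)) + p (π ⟨k, hk'⟩) / (m - (k + 1)) :=
    fun π => by
      simp only [prefixMartingale, prefixSum_succ hk']
      push_cast
      ring
  have hcurr : ∀ π, prefixMartingale p k π = (prefixSum p k π - (k + 1) / m) / (m - (k + 1))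
      + (1 - prefixSum p k π) / (m - k) / (m - (k + 1)) := fun π => by
    simp only [prefixMartingale]
    field_simp
    ring
  calc ∫ π in s, prefixMartingale p (k + 1) π ∂μ
      = ∫ π in s, (prefixSum p k π - (k + 1) / m) / (m - (k + 1)) ∂μ
        + ∫ π in s, p (π ⟨k, hk'⟩) / (m - (k + 1)) ∂μ := by
        simp_rw [hsucc]
        exact integral_add .of_finite .of_finite
    _ = ∫ π in s, (prefixSum p k π - (k + 1) / m) / (m - (k + 1)) ∂μ
        + ∫ π in s, (1 - prefixSum p k π) / (m - k) / (m - (k + 1)) ∂μ := by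
        congr 1
        rw [integral_div, integral_div, setIntegral_apply_eq_one_sub_prefixSum μ hsum hk' hs]
    _ = ∫ π in s, prefixMartingale p k π ∂μ := by
        simp_rw [hcurr]
        exact (integral_add .of_finite .of_finite).symm

end MartingaleStep

theorem stmt4_general (m : ℕ) (p : Fin m → ℝ)
    (hsum : ∑ v, p v = 1) :
    let μ : Measure (Equiv.Perm (Fin m)) := (PMF.uniformOfFintype (Equiv.Perm (Fin m))).toMeasure
    let M : ℕ → Equiv.Perm (Fin m) → ℝ := fun k π =>
      ((∑ j ∈ Finset.univ.filter (fun j : Fin m => (j : ℕ) < k), p (π j)) - (k : ℝ) / m) /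
        ((m : ℝ) - k)
    (∀ k, k ≤ m - 1 → StronglyMeasurable[(permFiltration m) k] (M k)) ∧
    (∀ k, k + 1 ≤ m - 1 → μ[M (k + 1)|(permFiltration m) k] =ᵐ[μ] M k) := by
  intro μ M
  refine ⟨fun k _ => (measurable_prefixMartingale p k).stronglyMeasurable, fun k hk => ?_⟩
  exact (ae_eq_condExp_of_forall_setIntegral_eq ((permFiltration m).le k) .of_finite
    (fun _ _ _ => Integrable.of_finite.integrableOn)
    (fun s hs _ => (setIntegral_prefixMartingale_succ μ hsum (by omega) hs).symm)
    (measurable_prefixMartingale p k).stronglyMeasurable.aestronglyMeasurable).symm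

/-- Let `π` be a uniformly random permutation of `[m]`, `m ≥ 2`, and `p` a
probability mass function on `[m]`.  With `M_k = (Σ_{j=1}^k p_{π(j)} − k/m)/(m−k)` (so `M_0 = 0`),
the process `(M_k)_{0 ≤ k ≤ m−1}` is a martingale for the filtration generated by
`(π(1), …, π(k))`: it is adapted, and the conditional expectation of `M_{k+1}` given `F_k`
is a.e. equal to `M_k`. -/
theorem stmt4 (m : ℕ) (hm : 2 ≤ m) (p : Fin m → ℝ)
    (hp : ∀ v, 0 < p v) (hsum : ∑ v, p v = 1) :
    let μ : Measure (Equiv.Perm (Fin m)) := (PMF.uniformOfFintype (Equiv.Perm (Fin m))).toMeasure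
    let M : ℕ → Equiv.Perm (Fin m) → ℝ := fun k π =>
      ((∑ j ∈ Finset.univ.filter (fun j : Fin m => (j : ℕ) < k), p (π j)) - (k : ℝ) / m) /
        ((m : ℝ) - k)
    (∀ k, k ≤ m - 1 → StronglyMeasurable[(permFiltration m) k] (M k)) ∧
    (∀ k, k + 1 ≤ m - 1 → μ[M (k + 1)|(permFiltration m) k] =ᵐ[μ] M k) :=
  stmt4_general m p hsum
end

section
/- For every integer m ≥ 1 and every probability mass function p on [m], E[ max_{1 ≤ i ≤ m} | Σ_{j=1}^i p_{π(j)} − i/m | ] ≤ 16 σ(p). -/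
/-!
With `x v = p v - 1/m`, the quantity inside the maximum is the partial sum `T k` of `x` over the
first `k` positions of `π`. As `∑ x = 0`, `T k / (m - k)` is minus the mean of the values not yet
revealed, hence a martingale for the uniform measure on permutations. Doob's `L²` maximal
inequality and the sampling-without-replacement bound `E (T n)² ≤ n ∑ x² / m` control
`max_{k ≤ m/2} |T k|`; partial sums past `m/2` are, up to sign, partial sums of length at most
`m/2` of the reversed permutation. Cauchy–Schwarz turns the `L²` bound into a bound on the mean.
-/

open Finset Equiv
open scoped Nat

namespace RandomPermutation

section RunningMax

def runningMax (f : ℕ → ℝ) (n : ℕ) : ℝ :=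
  (range (n + 1)).sup' nonempty_range_add_one fun j => |f j|

variable (f : ℕ → ℝ)

lemma abs_le_runningMax {j n : ℕ} (h : j ≤ n) : |f j| ≤ runningMax f n :=
  le_sup' (fun j => |f j|) (mem_range.2 (Nat.lt_succ_of_le h))

lemma runningMax_nonneg (n : ℕ) : 0 ≤ runningMax f n :=
  (abs_nonneg _).trans (abs_le_runningMax f n.zero_le)

lemma runningMax_succ (n : ℕ) : runningMax f (n + 1) = max (runningMax f n) |f (n + 1)| := by
  simp only [runningMax, range_add_one (n := n + 1)]
  rw [sup'_insert (H := nonempty_range_add_one), max_comm]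

lemma runningMax_congr {f g : ℕ → ℝ} {n : ℕ} (h : ∀ j ≤ n, f j = g j) :
    runningMax f n = runningMax g n :=
  sup'_congr _ rfl fun j hj => by rw [h j (Nat.lt_succ_iff.1 (mem_range.1 hj))]

lemma sum_runningMax_mul_abs_sub_abs_le (h0 : f 0 = 0) (n : ℕ) :
    ∑ k ∈ range n, runningMax f k * (|f (k + 1)| - |f k|)
      ≤ runningMax f n * |f n| - runningMax f n ^ 2 / 2 := by
  induction n with
  | zero => simp [runningMax, h0]
  | succ n ih =>
    rw [sum_range_succ, runningMax_succ]
    rcases le_total |f (n + 1)| (runningMax f n) with h | h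
    · rw [max_eq_left h]; linarith
    · rw [max_eq_right h]; nlinarith [sq_nonneg (|f (n + 1)| - runningMax f n)]

lemma sign_mul_le_abs (a b : ℝ) : (SignType.sign a : ℝ) * b ≤ |b| := by
  rcases lt_trichotomy a 0 with ha | rfl | ha <;> simp [*, neg_le_abs, le_abs_self]

/-- The martingale transform on the right has mean zero when `f` is a martingale. -/
theorem sq_runningMax_le (h0 : f 0 = 0) (n : ℕ) :
    runningMax f n ^ 2 ≤ 4 * f n ^ 2
      - 4 * ∑ k ∈ range n, runningMax f k * SignType.sign (f k) * (f (k + 1) - f k) := by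
  have hterm (k : ℕ) : runningMax f k * SignType.sign (f k) * (f (k + 1) - f k)
      ≤ runningMax f k * (|f (k + 1)| - |f k|) := by
    rw [mul_assoc, mul_sub, sign_mul_self]
    exact mul_le_mul_of_nonneg_left (sub_le_sub_right (sign_mul_le_abs _ _) _)
      (runningMax_nonneg f k)
  have := (sum_le_sum fun k _ => hterm k).trans (sum_runningMax_mul_abs_sub_abs_le f h0 n)
  nlinarith [sq_nonneg (runningMax f n - 2 * |f n|), sq_abs (f n)]

end RunningMax

section Exchangeability

variable {α : Type*} [Fintype α] [DecidableEq α]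

lemma sum_mul_apply_eq_of_mul_swap_invariant (x : α → ℝ) (g : Perm α → ℝ) {a b : α}
    (hg : ∀ π, g (π * swap a b) = g π) :
    ∑ π, g π * x (π a) = ∑ π, g π * x (π b) := by
  rw [← Equiv.sum_comp (Equiv.mulRight (swap a b))]
  simp [hg]

lemma card_mul_sum_sq_apply (x : α → ℝ) (b : α) :
    Fintype.card α * ∑ π : Perm α, x (π b) ^ 2 = (Fintype.card α)! * ∑ v, x v ^ 2 := by
  have hb (a : α) : ∑ π : Perm α, x (π a) ^ 2 = ∑ π : Perm α, x (π b) ^ 2 := by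
    simpa using sum_mul_apply_eq_of_mul_swap_invariant (x · ^ 2) 1 (a := a) (b := b)
      fun _ => rfl
  calc (Fintype.card α : ℝ) * ∑ π : Perm α, x (π b) ^ 2
      = ∑ a, ∑ π : Perm α, x (π a) ^ 2 := by simp [hb]
    _ = ∑ π : Perm α, ∑ a, x (π a) ^ 2 := sum_comm
    _ = (Fintype.card α)! * ∑ v, x v ^ 2 := by
      simp [fun π : Perm α => Equiv.sum_comp π (x · ^ 2), Fintype.card_perm]

end Exchangeability

section PartialSum

variable {m : ℕ} (x : Fin m → ℝ)

def partialSum (π : Perm (Fin m)) (k : ℕ) : ℝ :=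
  ∑ j ∈ univ.filter (fun j : Fin m => (j : ℕ) < k), x (π j)

variable (π : Perm (Fin m))

lemma partialSum_zero : partialSum x π 0 = 0 := by
  simp [partialSum]

lemma partialSum_succ {k : ℕ} (hk : k < m) :
    partialSum x π (k + 1) = partialSum x π k + x (π ⟨k, hk⟩) := by
  have : univ.filter (fun j : Fin m => (j : ℕ) < k + 1)
      = insert ⟨k, hk⟩ (univ.filter fun j : Fin m => (j : ℕ) < k) := by
    ext j
    simp only [mem_filter, mem_univ, true_and, mem_insert, Fin.ext_iff]
    omega
  rw [partialSum, this, sum_insert (by simp), partialSum, add_comm]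

lemma partialSum_add_sum_filter_le (k : ℕ) :
    partialSum x π k + ∑ j ∈ univ.filter (fun j : Fin m => k ≤ (j : ℕ)), x (π j)
      = ∑ v, x v := by
  simp_rw [← not_lt]
  rw [partialSum, sum_filter_add_sum_filter_not, Equiv.sum_comp π x]

lemma card_filter_le_val {k : ℕ} (hk : k ≤ m) :
    (univ.filter fun j : Fin m => k ≤ (j : ℕ)).card = m - k := by
  simp_rw [← not_lt]
  rw [filter_not, card_sdiff_of_subset (filter_subset _ _), Fin.card_filter_val_lt]
  simp [hk]

lemma partialSum_mul_swap {k : ℕ} {a b : Fin m} (ha : k ≤ (a : ℕ)) (hb : k ≤ (b : ℕ)) :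
    partialSum x (π * swap a b) k = partialSum x π k := by
  refine sum_congr rfl fun j hj => ?_
  have hj : (j : ℕ) < k := (mem_filter.1 hj).2
  rw [Perm.mul_apply, swap_apply_of_ne_of_ne (by omega) (by omega)]

lemma partialSum_mul_revPerm (hx : ∑ v, x v = 0) {k : ℕ} (hk : k ≤ m) :
    partialSum x (π * Fin.revPerm) (m - k) = -partialSum x π k := by
  have := partialSum_add_sum_filter_le x π k
  rw [hx] at this
  rw [eq_neg_iff_add_eq_zero, add_comm, ← this, partialSum]
  congr 1
  refine sum_nbij' Fin.rev Fin.rev (fun a ha => ?_) (fun a ha => ?_) (fun a _ => Fin.rev_rev a)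
    (fun a _ => Fin.rev_rev a) (fun a _ => by simp)
  all_goals simp only [mem_filter, mem_univ, true_and, Fin.val_rev] at ha ⊢; omega

end PartialSum

section Martingale

variable {m : ℕ} (x : Fin m → ℝ)

/-- `hg` says that `g π` only depends on `π` through its first `k` values; the identity is the
martingale property of `scaledPartialSum`. -/
lemma sum_mul_partialSum_add_mul_apply (hx : ∑ v, x v = 0) {k : ℕ} (hk : k < m)
    (g : Perm (Fin m) → ℝ)
    (hg : ∀ π (b : Fin m), k ≤ (b : ℕ) → g (π * swap ⟨k, hk⟩ b) = g π) :
    ∑ π, g π * (partialSum x π k + (m - k) * x (π ⟨k, hk⟩)) = 0 := by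
  set tail := univ.filter fun j : Fin m => k ≤ (j : ℕ)
  have htail :
      ∑ b ∈ tail, ∑ π, g π * x (π b) = (m - k) * ∑ π, g π * x (π ⟨k, hk⟩) := by
    rw [sum_congr rfl fun b hb => (sum_mul_apply_eq_of_mul_swap_invariant x g
      fun π => hg π b (mem_filter.1 hb).2).symm, sum_const, card_filter_le_val hk.le,
      nsmul_eq_mul, Nat.cast_sub hk.le]
  have hrest (π : Perm (Fin m)) : ∑ b ∈ tail, x (π b) = -partialSum x π k := by
    linarith [partialSum_add_sum_filter_le x π k]
  simp_rw [mul_add, sum_add_distrib, mul_left_comm _ (m - k : ℝ), ← mul_sum, ← htail,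
    sum_comm (s := tail), ← mul_sum, hrest, mul_neg, sum_neg_distrib, add_neg_cancel]

noncomputable def scaledPartialSum (π : Perm (Fin m)) (k : ℕ) : ℝ :=
  partialSum x π k / (m - k)

lemma scaledPartialSum_mul_swap (π : Perm (Fin m)) {k : ℕ} {a b : Fin m} (ha : k ≤ (a : ℕ))
    (hb : k ≤ (b : ℕ)) : scaledPartialSum x (π * swap a b) k = scaledPartialSum x π k := by
  rw [scaledPartialSum, partialSum_mul_swap x π ha hb, scaledPartialSum]

lemma sum_mul_scaledPartialSum_succ_sub (hx : ∑ v, x v = 0) {k : ℕ} (hk : k + 1 < m)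
    (g : Perm (Fin m) → ℝ)
    (hg : ∀ π (b : Fin m), k ≤ (b : ℕ) → g (π * swap ⟨k, by omega⟩ b) = g π) :
    ∑ π, g π * (scaledPartialSum x π (k + 1) - scaledPartialSum x π k) = 0 := by
  have hm₁ : (m : ℝ) - (k + 1) ≠ 0 := by
    rw [sub_ne_zero]; exact_mod_cast hk.ne'
  have hm₀ : (m : ℝ) - k ≠ 0 := by
    rw [sub_ne_zero]; exact_mod_cast (show k < m by omega).ne'
  have hincr (π : Perm (Fin m)) : scaledPartialSum x π (k + 1) - scaledPartialSum x π k
      = (partialSum x π k + (m - k) * x (π ⟨k, by omega⟩)) / ((m - k) * (m - (k + 1))) := by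
    rw [scaledPartialSum, scaledPartialSum, partialSum_succ x π (by omega)]
    push_cast
    field_simp
    ring
  simp_rw [hincr, mul_div_assoc', ← sum_div, sum_mul_partialSum_add_mul_apply x hx _ g hg,
    zero_div]

theorem sum_sq_runningMax_scaledPartialSum_le (hx : ∑ v, x v = 0) {n : ℕ} (hn : n < m) :
    ∑ π, runningMax (scaledPartialSum x π) n ^ 2
      ≤ 4 * ∑ π, scaledPartialSum x π n ^ 2 := by
  have hdrift : ∀ k ∈ range n, ∑ π, runningMax (scaledPartialSum x π) k
      * SignType.sign (scaledPartialSum x π k)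
      * (scaledPartialSum x π (k + 1) - scaledPartialSum x π k) = 0 := fun k hk =>
    have hkm : k + 1 < m := by have := mem_range.1 hk; omega
    sum_mul_scaledPartialSum_succ_sub x hx hkm _ fun π b hb => by
      have hprefix : ∀ j ≤ k, scaledPartialSum x (π * swap ⟨k, by omega⟩ b) j
          = scaledPartialSum x π j :=
        fun j hj => scaledPartialSum_mul_swap x π (by simpa using hj) (hj.trans hb)
      rw [runningMax_congr hprefix, hprefix k le_rfl]
  calc ∑ π, runningMax (scaledPartialSum x π) n ^ 2
      ≤ ∑ π, (4 * scaledPartialSum x π n ^ 2 - 4 * ∑ k ∈ range n,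
          runningMax (scaledPartialSum x π) k * SignType.sign (scaledPartialSum x π k)
            * (scaledPartialSum x π (k + 1) - scaledPartialSum x π k)) :=
        sum_le_sum fun π _ => sq_runningMax_le _ (by simp [scaledPartialSum, partialSum_zero]) n
    _ = 4 * ∑ π, scaledPartialSum x π n ^ 2 := by
        rw [sum_sub_distrib, ← mul_sum, ← mul_sum, sum_comm, sum_congr rfl hdrift]
        simp

theorem mul_sum_sq_partialSum_le (hx : ∑ v, x v = 0) {k : ℕ} (hk : k ≤ m) :
    m * ∑ π, partialSum x π k ^ 2 ≤ k * m ! * ∑ v, x v ^ 2 := by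
  induction k with
  | zero => simp [partialSum_zero]
  | succ k ih =>
    have hkm : k < m := hk
    have hcross : ∑ π, partialSum x π k * x (π ⟨k, hkm⟩) ≤ 0 := by
      have h := sum_mul_partialSum_add_mul_apply x hx hkm (partialSum x · k)
        fun π b hb => partialSum_mul_swap x π le_rfl hb
      simp_rw [mul_add, sum_add_distrib, ← sq, mul_left_comm _ (m - k : ℝ), ← mul_sum] at h
      have hpos : (0 : ℝ) < m - k := by rw [sub_pos]; exact_mod_cast hkm
      nlinarith [sum_nonneg fun π (_ : π ∈ univ) => sq_nonneg (partialSum x π k)]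
    have hsq := card_mul_sum_sq_apply x ⟨k, hkm⟩
    simp only [Fintype.card_fin] at hsq
    simp_rw [partialSum_succ x _ hkm, add_sq, sum_add_distrib, mul_assoc (2 : ℝ), ← mul_sum]
    push_cast
    nlinarith [ih hkm.le, mul_nonpos_of_nonneg_of_nonpos (Nat.cast_nonneg (α := ℝ) m) hcross]

theorem mul_sq_sum_runningMax_le (hx : ∑ v, x v = 0) {n : ℕ} (hn : n < m) :
    (m - n) ^ 2 * m * (∑ π, runningMax (scaledPartialSum x π) n) ^ 2
      ≤ 4 * n * m ! ^ 2 * ∑ v, x v ^ 2 := by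
  have hgap : (m : ℝ) - n ≠ 0 := by rw [sub_ne_zero]; exact_mod_cast hn.ne'
  have hcs := sq_sum_le_card_mul_sum_sq (s := univ)
    (f := fun π => runningMax (scaledPartialSum x π) n)
  rw [card_univ, Fintype.card_perm, Fintype.card_fin] at hcs
  have hscale :
      (m - n) ^ 2 * ∑ π, scaledPartialSum x π n ^ 2 = ∑ π, partialSum x π n ^ 2 := by
    rw [mul_sum]
    refine sum_congr rfl fun π _ => ?_
    rw [scaledPartialSum, div_pow, mul_div_cancel₀ _ (pow_ne_zero 2 hgap)]
  have hdoob := sum_sq_runningMax_scaledPartialSum_le x hx hn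
  have hvar := mul_sum_sq_partialSum_le x hx hn.le
  calc (m - n) ^ 2 * m * (∑ π, runningMax (scaledPartialSum x π) n) ^ 2
      ≤ (m - n) ^ 2 * m * (m ! * (4 * ∑ π, scaledPartialSum x π n ^ 2)) := by
        gcongr
        exact hcs.trans (by gcongr)
    _ = 4 * m ! * (m * ∑ π, partialSum x π n ^ 2) := by rw [← hscale]; ring
    _ ≤ 4 * m ! * (n * m ! * ∑ v, x v ^ 2) := by gcongr
    _ = 4 * n * m ! ^ 2 * ∑ v, x v ^ 2 := by ring

lemma abs_partialSum_le_mul_runningMax (π : Perm (Fin m)) {j n : ℕ} (hj : j ≤ n) (hn : n < m) :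
    |partialSum x π j| ≤ m * runningMax (scaledPartialSum x π) n := by
  have hgap : (0 : ℝ) < m - j := by rw [sub_pos]; exact_mod_cast hj.trans_lt hn
  have : partialSum x π j = (m - j) * scaledPartialSum x π j := by
    rw [scaledPartialSum, mul_div_cancel₀ _ hgap.ne']
  rw [this, abs_mul, abs_of_pos hgap]
  exact mul_le_mul (by linarith [(Nat.cast_nonneg j : (0 : ℝ) ≤ j)])
    (abs_le_runningMax _ hj) (abs_nonneg _) (Nat.cast_nonneg m)

lemma abs_partialSum_le_runningMax_add (hx : ∑ v, x v = 0) (π : Perm (Fin m)) {n k : ℕ}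
    (hn : n < m) (hmn : m ≤ 2 * n + 1) (hk : k ≤ m) :
    |partialSum x π k| ≤ m * (runningMax (scaledPartialSum x π) n
      + runningMax (scaledPartialSum x (π * Fin.revPerm)) n) := by
  have hA := runningMax_nonneg (scaledPartialSum x π) n
  have hB := runningMax_nonneg (scaledPartialSum x (π * Fin.revPerm)) n
  rcases le_or_gt k n with hkn | hkn
  · nlinarith [abs_partialSum_le_mul_runningMax x π hkn hn]
  · rw [← abs_neg, ← partialSum_mul_revPerm x π hx hk]
    nlinarith [abs_partialSum_le_mul_runningMax x (π * Fin.revPerm) (show m - k ≤ n by omega) hn]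

theorem sum_iSup_abs_partialSum_le (hm : 0 < m) (hx : ∑ v, x v = 0) :
    ∑ π, ⨆ i : Fin m, |partialSum x π (i + 1)| ≤ 16 * m ! * √(∑ v, x v ^ 2) := by
  have : Nonempty (Fin m) := ⟨⟨0, hm⟩⟩
  set n := m / 2
  have hn : n < m := Nat.div_lt_self hm one_lt_two
  set A : Perm (Fin m) → ℝ := fun π => runningMax (scaledPartialSum x π) n
  have hmax : ∑ π, ⨆ i : Fin m, |partialSum x π (i + 1)| ≤ 2 * m * ∑ π, A π := by
    calc _ ≤ ∑ π, m * (A π + A (π * Fin.revPerm)) := sum_le_sum fun π _ =>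
          ciSup_le fun i => abs_partialSum_le_runningMax_add x hx π hn (by omega) i.isLt
      _ = 2 * m * ∑ π, A π := by
          have hrev : ∑ π, A (π * Fin.revPerm) = ∑ π, A π :=
            Equiv.sum_comp (Equiv.mulRight Fin.revPerm) A
          rw [← mul_sum, sum_add_distrib, hrev]
          ring
  have hgap : (0 : ℝ) < m - n := by rw [sub_pos]; exact_mod_cast hn
  have hmn : (m : ℝ) * n ≤ 2 * (m - n) ^ 2 := by
    have h₁ : (n : ℝ) ≤ m - n := by
      rw [le_sub_iff_add_le, ← two_mul]; exact_mod_cast Nat.mul_div_le m 2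
    nlinarith [(Nat.cast_nonneg n : (0 : ℝ) ≤ n)]
  have hsq : (2 * m * ∑ π, A π) ^ 2 ≤ (16 * m !) ^ 2 * ∑ v, x v ^ 2 := by
    refine le_of_mul_le_mul_left ?_ (pow_pos hgap 2)
    calc (m - n : ℝ) ^ 2 * (2 * m * ∑ π, A π) ^ 2
        = 4 * m * ((m - n) ^ 2 * m * (∑ π, A π) ^ 2) := by ring
      _ ≤ 4 * m * (4 * n * m ! ^ 2 * ∑ v, x v ^ 2) :=
          mul_le_mul_of_nonneg_left (mul_sq_sum_runningMax_le x hx hn) (by positivity)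
      _ = 16 * (m * n) * m ! ^ 2 * ∑ v, x v ^ 2 := by ring
      _ ≤ 16 * (2 * (m - n) ^ 2) * m ! ^ 2 * ∑ v, x v ^ 2 := by gcongr
      _ ≤ (m - n) ^ 2 * ((16 * m !) ^ 2 * ∑ v, x v ^ 2) := by
          linarith [show 0 ≤ (m - n : ℝ) ^ 2 * m ! ^ 2 * ∑ v, x v ^ 2 by positivity]
  refine hmax.trans ?_
  rw [← Real.sqrt_sq (by positivity : (0 : ℝ) ≤ 16 * m !), ← Real.sqrt_mul (by positivity)]
  exact Real.le_sqrt_of_sq_le hsq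

end Martingale

end RandomPermutation

open RandomPermutation

theorem stmt5_general (m : ℕ) (hm : 1 ≤ m) (p : Fin m → ℝ)
    (hsum : ∑ v, p v = 1) :
    ((∑ π : Equiv.Perm (Fin m),
        ⨆ i : Fin m,
          |(∑ j ∈ Finset.univ.filter (fun j : Fin m => (j : ℕ) ≤ (i : ℕ)), p (π j))
            - (((i : ℕ) : ℝ) + 1) / m|) /
      (Fintype.card (Equiv.Perm (Fin m)) : ℝ))
      ≤ 16 * Real.sqrt (∑ v, (p v) ^ 2) := by
  have hm₀ : (m : ℝ) ≠ 0 := by positivity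
  set x : Fin m → ℝ := fun v => p v - 1 / m
  have hx : ∑ v, x v = 0 := by simp [x, sum_sub_distrib, hsum, hm₀]
  have hx₂ : ∑ v, x v ^ 2 ≤ ∑ v, p v ^ 2 := by
    have : ∑ v, x v ^ 2 = ∑ v, p v ^ 2 - 1 / m := by
      simp only [x, sub_sq, sum_add_distrib, sum_sub_distrib, ← sum_mul, ← mul_sum, hsum,
        sum_const, card_univ, Fintype.card_fin, nsmul_eq_mul]
      field_simp
      ring
    rw [this]; linarith [show (0 : ℝ) < 1 / m by positivity]
  have hbody (π : Perm (Fin m)) (i : Fin m) :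
      (∑ j ∈ univ.filter (fun j : Fin m => (j : ℕ) ≤ i), p (π j)) - ((i : ℕ) + 1) / m
        = partialSum x π (i + 1) := by
    have hcard : (univ.filter fun j : Fin m => (j : ℕ) ≤ i).card = i + 1 := by
      simpa [Nat.lt_succ_iff, i.isLt] using Fin.card_filter_val_lt (n := m) (m := i + 1)
    simp only [partialSum, x, sum_sub_distrib, sum_const, Nat.lt_succ_iff, hcard]
    rw [nsmul_eq_mul, mul_one_div]
    push_cast
    ring
  simp_rw [hbody, Fintype.card_perm, Fintype.card_fin]
  rw [div_le_iff₀ (by positivity)]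
  calc _ ≤ 16 * m ! * √(∑ v, x v ^ 2) := sum_iSup_abs_partialSum_le x hm hx
    _ ≤ 16 * √(∑ v, p v ^ 2) * m ! := by
      rw [mul_right_comm]; gcongr

/-- Let `π` be a uniformly random permutation of `[m]` and `p` a probability
mass function on `[m]`.  Then `E[ max_{1 ≤ i ≤ m} | Σ_{j=1}^i p_{π(j)} − i/m | ] ≤ 16 σ(p)`.
The expectation under the uniform distribution on permutations is written as the average over
all permutations; the index `i : Fin m` corresponds to `i+1 ∈ {1, …, m}`. -/
theorem stmt5 (m : ℕ) (hm : 1 ≤ m) (p : Fin m → ℝ)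
    (hp : ∀ v, 0 < p v) (hsum : ∑ v, p v = 1) :
    ((∑ π : Equiv.Perm (Fin m),
        ⨆ i : Fin m,
          |(∑ j ∈ Finset.univ.filter (fun j : Fin m => (j : ℕ) ≤ (i : ℕ)), p (π j))
            - (((i : ℕ) : ℝ) + 1) / m|) /
      (Fintype.card (Equiv.Perm (Fin m)) : ℝ))
      ≤ 16 * Real.sqrt (∑ v, (p v) ^ 2) :=
  stmt5_general m hm p hsum
end

section
/- For each m ≥ 1 let q(m) = (q_1,…,q_{d(m)}) be a probability mass function with all entries positive, where d = d(m) → ∞ and q_max(m) := max_{1 ≤ i ≤ d(m)} q_i → 0 as m → ∞. Let (U_i^{(m)})_{1 ≤ i ≤ d(m)} be i.i.d. random variables uniformly distributed on (0,1), and define W_m(t) := Σ_{i=1}^{d(m)} q_i 1{U_i^{(m)} ≤ t} − t for t ∈ [0,1]. Then sup_{t∈[0,1]} |W_m(t)| → 0 in probability as m → ∞; that is, for every ε > 0, P( sup_{t∈[0,1]} |W_m(t)| > ε ) → 0 as m → ∞. -/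
/-!
For fixed `t` the weighted empirical distribution function `F(t) = ∑ qᵢ 1{Uᵢ ≤ t}` has mean `t`
and, by independence, variance at most `∑ qᵢ² / 4 ≤ q_max / 4`, so Chebyshev controls
`|F(t) - t|` at each point of the grid `j / k`, `0 ≤ j ≤ k`. Since `F` is monotone, closeness on
the grid gives closeness on all of `[0, 1]` up to `1 / k`. A union bound over the `k + 1` grid
points then bounds `P(sup |F(t) - t| > ε)` by `(k + 1) q_max / ε²` with `k ≈ 2 / ε`, which tends
to `0` with `q_max`.
-/

open MeasureTheory Filter ProbabilityTheory Set

lemma abs_sub_le_of_monotone_of_grid {F : ℝ → ℝ} (hF : Monotone F) {k : ℕ} (hk : 0 < k)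
    {c : ℝ} (hgrid : ∀ j ≤ k, |F (j / k) - j / k| ≤ c) {t : ℝ} (ht : t ∈ Icc (0 : ℝ) 1) :
    |F t - t| ≤ c + 1 / k := by
  have hk' : (0 : ℝ) < k := by exact_mod_cast hk
  have htk : 0 ≤ t * k := mul_nonneg ht.1 hk'.le
  have htk_le : t * k ≤ k := mul_le_of_le_one_left hk'.le ht.2
  -- `t` lies between the grid points `⌊t k⌋ / k` and `⌈t k⌉ / k`, each within `1 / k` of it.
  have hlo : ⌊t * k⌋₊ ≤ k := Nat.floor_le_of_le (by exact_mod_cast htk_le)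
  have hhi : ⌈t * k⌉₊ ≤ k := Nat.ceil_le.mpr htk_le
  have hlo_le : (⌊t * k⌋₊ : ℝ) / k ≤ t := by
    rw [div_le_iff₀ hk']; exact Nat.floor_le htk
  have hlo_ge : t - 1 / k ≤ (⌊t * k⌋₊ : ℝ) / k := by
    rw [sub_le_iff_le_add, ← add_div, le_div_iff₀ hk']
    exact (Nat.lt_floor_add_one _).le
  have hhi_ge : t ≤ (⌈t * k⌉₊ : ℝ) / k := by
    rw [le_div_iff₀ hk']; exact Nat.le_ceil _
  have hhi_le : (⌈t * k⌉₊ : ℝ) / k ≤ t + 1 / k := by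
    rw [div_le_iff₀ hk', add_mul, one_div_mul_cancel hk'.ne']
    exact (Nat.ceil_lt_add_one htk).le
  have h_lo := abs_le.1 (hgrid _ hlo)
  have h_hi := abs_le.1 (hgrid _ hhi)
  have hF_lo := hF hlo_le
  have hF_hi := hF hhi_ge
  rw [abs_le]
  constructor <;> linarith

lemma sum_sq_le_of_le_of_sum_eq_one {ι : Type*} {s : Finset ι} {w : ι → ℝ} {Q : ℝ}
    (hw : ∀ i ∈ s, 0 ≤ w i) (hsum : ∑ i ∈ s, w i = 1) (hQ : ∀ i ∈ s, w i ≤ Q) :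
    ∑ i ∈ s, w i ^ 2 ≤ Q :=
  calc ∑ i ∈ s, w i ^ 2 ≤ ∑ i ∈ s, w i * Q :=
        Finset.sum_le_sum fun i hi => by
          rw [sq]; exact mul_le_mul_of_nonneg_left (hQ i hi) (hw i hi)
    _ = Q := by rw [← Finset.sum_mul, hsum, one_mul]

instance isProbabilityMeasure_restrict_Ioo_zero_one :
    IsProbabilityMeasure (volume.restrict (Ioo (0 : ℝ) 1)) :=
  ⟨by simp⟩

lemma measureReal_pi_uniform_eval_le {ι : Type*} [Fintype ι] (i : ι) {t : ℝ}
    (ht : t ∈ Icc (0 : ℝ) 1) :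
    (Measure.pi fun _ : ι => volume.restrict (Ioo (0 : ℝ) 1)).real {ω | ω i ≤ t} = t := by
  change (Measure.pi _).real (Function.eval (β := fun _ => ℝ) i ⁻¹' Iic t) = t
  rw [(measurePreserving_eval _ i).measureReal_preimage measurableSet_Iic.nullMeasurableSet,
    Measure.restrict_congr_set Ioo_ae_eq_Ioc, measureReal_restrict_apply measurableSet_Iic,
    Iic_inter_Ioc_of_le ht.2, Real.volume_real_Ioc_of_le ht.1, sub_zero]

section WeightedEmpiricalCDF

variable {Ω ι : Type*} [Fintype ι]

noncomputable def weightedEmpiricalCDF (w : ι → ℝ) (X : ι → Ω → ℝ) (ω : Ω) (t : ℝ) : ℝ :=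
  ∑ i, w i * (if X i ω ≤ t then 1 else 0)

variable {w : ι → ℝ} {X : ι → Ω → ℝ}

lemma monotone_weightedEmpiricalCDF (hw : ∀ i, 0 ≤ w i) (ω : Ω) :
    Monotone (weightedEmpiricalCDF w X ω) := by
  intro s t hst
  refine Finset.sum_le_sum fun i _ => mul_le_mul_of_nonneg_left ?_ (hw i)
  by_cases hs : X i ω ≤ s
  · simp [hs, hs.trans hst]
  · split_ifs <;> norm_num

variable [MeasurableSpace Ω] {P : Measure Ω}

lemma integral_weightedEmpiricalCDF [IsFiniteMeasure P] (hX : ∀ i, Measurable (X i)) (t : ℝ) :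
    ∫ ω, weightedEmpiricalCDF w X ω t ∂P = ∑ i, w i * P.real {ω | X i ω ≤ t} := by
  have hind : ∀ i ω,
      (if X i ω ≤ t then (1 : ℝ) else 0) = {ω | X i ω ≤ t}.indicator (fun _ => 1) ω :=
    fun i ω => by by_cases h : X i ω ≤ t <;> simp [h]
  have hmeas : ∀ i, MeasurableSet {ω | X i ω ≤ t} :=
    fun i => measurableSet_le (hX i) measurable_const
  simp only [weightedEmpiricalCDF, hind]
  rw [integral_finsetSum _ fun i _ => ((integrable_const 1).indicator (hmeas i)).const_mul (w i)]
  refine Finset.sum_congr rfl fun i _ => ?_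
  rw [integral_const_mul, integral_indicator_const _ (hmeas i), smul_eq_mul, mul_one]

lemma ite_le_mem_Icc (x t : ℝ) : (if x ≤ t then (1 : ℝ) else 0) ∈ Icc (0 : ℝ) 1 := by
  split_ifs <;> norm_num

lemma memLp_ite_le [IsFiniteMeasure P] {Y : Ω → ℝ} (hY : Measurable Y) (t : ℝ) (p : ENNReal) :
    MemLp (fun ω => if Y ω ≤ t then (1 : ℝ) else 0) p P :=
  memLp_of_bounded (ae_of_all _ fun ω => ite_le_mem_Icc (Y ω) t)
    (measurable_const.ite (measurableSet_le hY measurable_const)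
      measurable_const).aestronglyMeasurable p

lemma memLp_weightedEmpiricalCDF [IsFiniteMeasure P] (hX : ∀ i, Measurable (X i)) (t : ℝ)
    (p : ENNReal) : MemLp (fun ω => weightedEmpiricalCDF w X ω t) p P :=
  memLp_finsetSum _ fun i _ => (memLp_ite_le (hX i) t p).const_mul (w i)

lemma variance_weightedEmpiricalCDF_le [IsProbabilityMeasure P] (hX : ∀ i, Measurable (X i))
    (hindep : iIndepFun X P) (t : ℝ) :
    Var[fun ω => weightedEmpiricalCDF w X ω t; P] ≤ (∑ i, w i ^ 2) / 4 := by
  set g : ℝ → ℝ := fun x => if x ≤ t then 1 else 0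
  have hg : Measurable g := measurable_const.ite measurableSet_Iic measurable_const
  have hvar_summand : ∀ i, Var[fun ω => w i * g (X i ω); P] ≤ w i ^ 2 / 4 := fun i => by
    have hvar := variance_le_sq_of_bounded (ae_of_all P fun ω => ite_le_mem_Icc (X i ω) t)
      (memLp_ite_le (hX i) t 2).aestronglyMeasurable.aemeasurable
    rw [variance_const_mul]
    norm_num at hvar
    linarith [mul_le_mul_of_nonneg_left hvar (sq_nonneg (w i))]
  have hsum : (fun ω => weightedEmpiricalCDF w X ω t) = ∑ i, fun ω => w i * g (X i ω) := by
    ext ω; simp [weightedEmpiricalCDF, g]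
  rw [hsum, IndepFun.variance_sum (fun i _ => (memLp_ite_le (hX i) t 2).const_mul (w i))
    fun i _ j _ hij => (hindep.indepFun hij).comp (hg.const_mul (w i)) (hg.const_mul (w j)),
    Finset.sum_div]
  exact Finset.sum_le_sum fun i _ => hvar_summand i

lemma measure_le_abs_weightedEmpiricalCDF_sub_le [IsProbabilityMeasure P]
    (hX : ∀ i, Measurable (X i)) (hindep : iIndepFun X P) (hw : ∑ i, w i = 1) {t : ℝ}
    (hcdf : ∀ i, P.real {ω | X i ω ≤ t} = t) {c : ℝ} (hc : 0 < c) :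
    P {ω | c ≤ |weightedEmpiricalCDF w X ω t - t|}
      ≤ ENNReal.ofReal ((∑ i, w i ^ 2) / 4 / c ^ 2) := by
  have hmean : ∫ ω, weightedEmpiricalCDF w X ω t ∂P = t := by
    rw [integral_weightedEmpiricalCDF hX, Finset.sum_congr rfl fun i _ => by rw [hcdf i],
      ← Finset.sum_mul, hw, one_mul]
  calc P {ω | c ≤ |weightedEmpiricalCDF w X ω t - t|}
      ≤ ENNReal.ofReal (Var[fun ω => weightedEmpiricalCDF w X ω t; P] / c ^ 2) := by
        simpa only [hmean] using
          meas_ge_le_variance_div_sq (memLp_weightedEmpiricalCDF (P := P) (w := w) hX t 2) hc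
    _ ≤ ENNReal.ofReal ((∑ i, w i ^ 2) / 4 / c ^ 2) := by
        gcongr; exact variance_weightedEmpiricalCDF_le hX hindep t

lemma measure_lt_iSup_abs_weightedEmpiricalCDF_sub_le [IsProbabilityMeasure P]
    (hX : ∀ i, Measurable (X i)) (hindep : iIndepFun X P) (hw_nonneg : ∀ i, 0 ≤ w i)
    (hw : ∑ i, w i = 1) (hunif : ∀ i, ∀ t ∈ Icc (0 : ℝ) 1, P.real {ω | X i ω ≤ t} = t)
    {ε : ℝ} (hε : 0 < ε) {k : ℕ} (hk : 2 / ε ≤ k) :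
    P {ω | ε < ⨆ t : Icc (0 : ℝ) 1, |weightedEmpiricalCDF w X ω t - t|}
      ≤ (k + 1) * ENNReal.ofReal ((∑ i, w i ^ 2) / 4 / (ε / 2) ^ 2) := by
  have hk_pos : 0 < k := by exact_mod_cast (div_pos two_pos hε).trans_le hk
  have hk_inv : 1 / (k : ℝ) ≤ ε / 2 := by
    rw [div_le_iff₀ (by exact_mod_cast hk_pos)]
    rw [div_le_iff₀ hε] at hk
    linarith
  have hgrid : ∀ j ∈ Finset.range (k + 1), (j : ℝ) / k ∈ Icc (0 : ℝ) 1 := fun j hj =>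
    ⟨by positivity,
      div_le_one_of_le₀ (by exact_mod_cast Finset.mem_range_succ_iff.1 hj) k.cast_nonneg⟩
  have hsub : {ω | ε < ⨆ t : Icc (0 : ℝ) 1, |weightedEmpiricalCDF w X ω t - t|}
      ⊆ ⋃ j ∈ Finset.range (k + 1),
          {ω | ε / 2 ≤ |weightedEmpiricalCDF w X ω (j / k) - j / k|} := by
    intro ω hω
    by_contra hnot
    simp only [mem_iUnion, mem_ofPred_eq, not_exists, not_le, Finset.mem_range] at hω hnot
    refine hω.not_ge (ciSup_le fun t => ?_)
    have := abs_sub_le_of_monotone_of_grid (monotone_weightedEmpiricalCDF hw_nonneg ω) hk_pos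
      (fun j hj => (hnot j (Nat.lt_succ_of_le hj)).le) t.2
    linarith
  calc _ ≤ ∑ j ∈ Finset.range (k + 1),
        P {ω | ε / 2 ≤ |weightedEmpiricalCDF w X ω (j / k) - j / k|} :=
        (measure_mono hsub).trans (measure_biUnion_finset_le _ _)
    _ ≤ ∑ _j ∈ Finset.range (k + 1), ENNReal.ofReal ((∑ i, w i ^ 2) / 4 / (ε / 2) ^ 2) :=
        Finset.sum_le_sum fun j hj => measure_le_abs_weightedEmpiricalCDF_sub_le hX hindep hw
          (fun i => hunif i _ (hgrid j hj)) (half_pos hε)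
    _ = (k + 1) * ENNReal.ofReal ((∑ i, w i ^ 2) / 4 / (ε / 2) ^ 2) := by
        rw [Finset.sum_const, Finset.card_range, nsmul_eq_mul, Nat.cast_add_one]

end WeightedEmpiricalCDF

theorem stmt6_general (d : ℕ → ℕ) (q : ∀ m, Fin (d m) → ℝ)
    (hq_pos : ∀ m i, 0 < q m i) (hq_sum : ∀ m, ∑ i, q m i = 1)
    (hqmax : Tendsto (fun m => ⨆ i : Fin (d m), q m i) atTop (nhds 0)) :
    ∀ ε : ℝ, 0 < ε →
      Tendsto
        (fun m =>
          (Measure.pi fun _ : Fin (d m) => volume.restrict (Set.Ioo (0 : ℝ) 1))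
            {ω : Fin (d m) → ℝ |
              ε < ⨆ t : Set.Icc (0 : ℝ) 1,
                |(∑ i, q m i * (if ω i ≤ (t : ℝ) then (1 : ℝ) else 0)) - (t : ℝ)|})
        atTop (nhds 0) := by
  intro ε hε
  set k := ⌈2 / ε⌉₊
  have hbound : Tendsto (fun m => (k + 1) * ENNReal.ofReal ((⨆ i, q m i) / 4 / (ε / 2) ^ 2))
      atTop (nhds 0) := by
    simpa using ENNReal.Tendsto.const_mul (a := k + 1)
      (ENNReal.tendsto_ofReal ((hqmax.div_const 4).div_const ((ε / 2) ^ 2))) (Or.inr (by simp))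
  refine tendsto_of_tendsto_of_tendsto_of_le_of_le tendsto_const_nhds hbound
    (fun _ => zero_le) fun m => ?_
  have hdev := measure_lt_iSup_abs_weightedEmpiricalCDF_sub_le
    (X := fun i (ω : Fin (d m) → ℝ) => ω i) (fun i => measurable_pi_apply i)
    (iIndepFun_pi fun _ => measurable_id.aemeasurable) (fun i => (hq_pos m i).le) (hq_sum m)
    (fun i _ => measureReal_pi_uniform_eval_le i) hε (Nat.le_ceil _)
  refine hdev.trans (mul_le_mul_right (ENNReal.ofReal_le_ofReal ?_) _)
  gcongr
  exact sum_sq_le_of_le_of_sum_eq_one (fun i _ => (hq_pos m i).le) (hq_sum m)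
    fun i _ => le_ciSup (Finite.bddAbove (finite_range _)) i

/-- For each `m`, let `q(m)` be a probability mass function of length `d(m)`
with positive entries, where `d(m) → ∞` and `max_i q_i(m) → 0`.  Let `(U_i^{(m)})_i` be i.i.d.
uniform on `(0,1)` and `W_m(t) = Σ_i q_i 1{U_i ≤ t} − t`.  Then `sup_{t ∈ [0,1]} |W_m(t)| → 0`
in probability. -/
theorem stmt6 (d : ℕ → ℕ) (q : ∀ m, Fin (d m) → ℝ)
    (hq_pos : ∀ m i, 0 < q m i) (hq_sum : ∀ m, ∑ i, q m i = 1)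
    (hd : Tendsto d atTop atTop)
    (hqmax : Tendsto (fun m => ⨆ i : Fin (d m), q m i) atTop (nhds 0)) :
    ∀ ε : ℝ, 0 < ε →
      Tendsto
        (fun m =>
          (Measure.pi fun _ : Fin (d m) => volume.restrict (Set.Ioo (0 : ℝ) 1))
            {ω : Fin (d m) → ℝ |
              ε < ⨆ t : Set.Icc (0 : ℝ) 1,
                |(∑ i, q m i * (if ω i ≤ (t : ℝ) then (1 : ℝ) else 0)) - (t : ℝ)|})
        atTop (nhds 0) :=
  stmt6_general d q hq_pos hq_sum hqmax
end

section
/- Let (c_j)_{j≥1} be a non-increasing sequence of positive real numbers with Σ_{j≥1} c_j³ < ∞ and Σ_{j≥1} c_j² = ∞, and let (ξ_j)_{j≥1} be independent random variables where ξ_j is exponentially distributed with rate c_j. Then for every pair of reals 0 ≤ r < s, almost surely Σ_{j≥1} c_j 1{r ≤ ξ_j ≤ s} = ∞. -/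
/-! With `X_j = c_j 1{r ≤ ξ_j ≤ s}`, independence gives
`E[exp(-(X_0 + ⋯ + X_{n-1}))] = ∏_{j<n} (1 - b_j)` where `b_j = (1 - e^{-c_j}) P(r ≤ ξ_j ≤ s)`.
Both factors of `b_j` are of order `c_j` (tangent-line bounds for `exp`, with `c_j ≤ c_0`), so
`b_j ≥ K c_j²` and `Σ b_j = ∞`, whence the product tends to `0`. The Chernoff bound
`P(X_0 + ⋯ + X_{n-1} ≤ M) ≤ e^M ∏_{j<n} (1 - b_j)` then shows that for every `M` the partial sums
stay below `M` with probability `0`. -/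

open MeasureTheory ProbabilityTheory Filter Topology Finset Real

lemma Real.sub_mul_exp_le_exp_sub_exp (x y : ℝ) : (x - y) * exp y ≤ exp x - exp y := by
  have h := mul_le_mul_of_nonneg_right (add_one_le_exp (x - y)) (exp_nonneg y)
  rw [← exp_add, sub_add_cancel] at h
  linarith

lemma tendsto_prod_range_one_sub_zero_of_not_summable {b : ℕ → ℝ} (hb0 : ∀ j, 0 ≤ b j)
    (hb1 : ∀ j, b j ≤ 1) (hb : ¬ Summable b) :
    Tendsto (fun n => ∏ j ∈ range n, (1 - b j)) atTop (𝓝 0) := by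
  have hexp : Tendsto (fun n => exp (-∑ j ∈ range n, b j)) atTop (𝓝 0) :=
    tendsto_exp_neg_atTop_nhds_zero.comp
      ((not_summable_iff_tendsto_nat_atTop_of_nonneg hb0).mp hb)
  refine squeeze_zero (fun n => prod_nonneg fun j _ => sub_nonneg.mpr (hb1 j)) (fun n => ?_) hexp
  rw [← sum_neg_distrib, exp_sum]
  exact prod_le_prod (fun j _ => sub_nonneg.mpr (hb1 j)) fun j _ => by
    linarith [add_one_le_exp (-b j)]

section

variable {Ω : Type*} [MeasurableSpace Ω] {μ : Measure Ω}

lemma sub_le_measureReal_preimage_Icc [IsFiniteMeasure μ] (X : Ω → ℝ) (r s : ℝ) :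
    μ.real {ω | X ω ≤ s} - μ.real {ω | X ω ≤ r} ≤ μ.real (X ⁻¹' Set.Icc r s) := by
  have hsub : {ω | X ω ≤ s} ⊆ {ω | X ω ≤ r} ∪ X ⁻¹' Set.Icc r s := fun ω hω => by
    by_cases h : X ω ≤ r
    · exact Or.inl h
    · exact Or.inr ⟨(not_le.mp h).le, hω⟩
  linarith [measureReal_mono (μ := μ) hsub,
    measureReal_union_le (μ := μ) {ω | X ω ≤ r} (X ⁻¹' Set.Icc r s)]

lemma mgf_indicator_const [IsProbabilityMeasure μ] {A : Set Ω} (hA : MeasurableSet A)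
    (c t : ℝ) : mgf (A.indicator fun _ => c) μ t = 1 - (1 - exp (t * c)) * μ.real A := by
  have h : (fun ω => exp (t * A.indicator (fun _ => c) ω))
      = fun ω => A.indicator (fun _ => exp (t * c) - 1) ω + 1 := by
    ext ω
    by_cases hω : ω ∈ A <;> simp [hω]
  rw [mgf, h, integral_add ((integrable_const _).indicator hA) (integrable_const 1),
    integral_indicator_const _ hA]
  simp only [smul_eq_mul, integral_const, probReal_univ, mul_one]
  ring

lemma measure_forall_sum_range_le_eq_zero [IsFiniteMeasure μ] {f : ℕ → Ω → ℝ}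
    (hf : ∀ j, Measurable (f j)) (hf0 : ∀ j ω, 0 ≤ f j ω)
    (h : Tendsto (fun n => mgf (∑ j ∈ range n, f j) μ (-1)) atTop (𝓝 0)) (M : ℝ) :
    μ {ω | ∀ n, ∑ j ∈ range n, f j ω ≤ M} = 0 := by
  have hchernoff : ∀ n, μ.real {ω | ∀ n, ∑ j ∈ range n, f j ω ≤ M}
      ≤ exp M * mgf (∑ j ∈ range n, f j) μ (-1) := fun n => by
    have hint : Integrable (fun ω => exp (-1 * (∑ j ∈ range n, f j) ω)) μ := by
      refine Integrable.of_bound (by fun_prop) 1 (ae_of_all _ fun ω => ?_)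
      rw [norm_of_nonneg (exp_nonneg _), exp_le_one_iff, Finset.sum_apply]
      linarith [sum_nonneg fun j (_ : j ∈ range n) => hf0 j ω]
    calc μ.real {ω | ∀ n, ∑ j ∈ range n, f j ω ≤ M}
        ≤ μ.real {ω | (∑ j ∈ range n, f j) ω ≤ M} :=
          measureReal_mono fun ω hω => by simpa [Finset.sum_apply] using hω n
      _ ≤ exp M * mgf (∑ j ∈ range n, f j) μ (-1) := by
          simpa using measure_le_le_exp_mul_mgf M (by norm_num) hint
  have hle : μ.real {ω | ∀ n, ∑ j ∈ range n, f j ω ≤ M} ≤ 0 := by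
    simpa using ge_of_tendsto (h.const_mul (exp M)) (Eventually.of_forall hchernoff)
  exact (measureReal_eq_zero_iff).mp (le_antisymm hle measureReal_nonneg)

lemma ae_tsum_ofReal_eq_top_of_tendsto_mgf [IsFiniteMeasure μ] {f : ℕ → Ω → ℝ}
    (hf : ∀ j, Measurable (f j)) (hf0 : ∀ j ω, 0 ≤ f j ω)
    (h : Tendsto (fun n => mgf (∑ j ∈ range n, f j) μ (-1)) atTop (𝓝 0)) :
    ∀ᵐ ω ∂μ, ∑' j, ENNReal.ofReal (f j ω) = ⊤ := by
  rw [ae_iff]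
  refine measure_mono_null (fun ω hω => ?_) (measure_iUnion_null fun M : ℕ =>
    measure_forall_sum_range_le_eq_zero hf hf0 h M)
  have hsum : Summable fun j => f j ω := by
    simpa [ENNReal.toReal_ofReal (hf0 _ ω)] using ENNReal.summable_toReal hω
  exact Set.mem_iUnion.mpr ⟨⌈∑' j, f j ω⌉₊, fun n =>
    (hsum.sum_le_tsum _ fun j _ => hf0 j ω).trans (Nat.le_ceil _)⟩

lemma mul_sub_mul_exp_le_measureReal_preimage_Icc [IsFiniteMeasure μ] {X : Ω → ℝ} {c r s : ℝ}
    (hc : 0 ≤ c) (hr : 0 ≤ r) (hrs : r ≤ s)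
    (hX : ∀ t, 0 ≤ t → μ {ω | X ω ≤ t} = ENNReal.ofReal (1 - exp (-c * t))) :
    c * (s - r) * exp (-c * s) ≤ μ.real (X ⁻¹' Set.Icc r s) := by
  have hcdf : ∀ t, 0 ≤ t → μ.real {ω | X ω ≤ t} = 1 - exp (-c * t) := fun t ht => by
    rw [measureReal_def, hX t ht, ENNReal.toReal_ofReal]
    exact sub_nonneg.mpr (exp_le_one_iff.mpr (by nlinarith))
  calc c * (s - r) * exp (-c * s) = (-c * r - -c * s) * exp (-c * s) := by ring
    _ ≤ exp (-c * r) - exp (-c * s) := sub_mul_exp_le_exp_sub_exp _ _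
    _ = μ.real {ω | X ω ≤ s} - μ.real {ω | X ω ≤ r} := by
        rw [hcdf s (hr.trans hrs), hcdf r hr]; ring
    _ ≤ μ.real (X ⁻¹' Set.Icc r s) := sub_le_measureReal_preimage_Icc X r s

lemma mul_sq_le_one_sub_mgf_indicator_preimage_Icc [IsProbabilityMeasure μ] {X : Ω → ℝ}
    (hX : Measurable X) {c C r s : ℝ} (hc : 0 ≤ c) (hcC : c ≤ C) (hr : 0 ≤ r) (hrs : r ≤ s)
    (hcdf : ∀ t, 0 ≤ t → μ {ω | X ω ≤ t} = ENNReal.ofReal (1 - exp (-c * t))) :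
    (s - r) * exp (-C * (1 + s)) * c ^ 2
      ≤ 1 - mgf ((X ⁻¹' Set.Icc r s).indicator fun _ => c) μ (-1) := by
  rw [mgf_indicator_const (hX measurableSet_Icc), neg_one_mul, sub_sub_cancel]
  have hexp : c * exp (-c) ≤ 1 - exp (-c) := by
    simpa using sub_mul_exp_le_exp_sub_exp 0 (-c)
  calc (s - r) * exp (-C * (1 + s)) * c ^ 2 ≤ (s - r) * exp (-c * (1 + s)) * c ^ 2 := by
        gcongr
        linarith
    _ = (c * exp (-c)) * (c * (s - r) * exp (-c * s)) := by
        rw [mul_add, mul_one, exp_add]; ring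
    _ ≤ (1 - exp (-c)) * μ.real (X ⁻¹' Set.Icc r s) :=
        mul_le_mul hexp (mul_sub_mul_exp_le_measureReal_preimage_Icc hc hr hrs hcdf)
          (by have := sub_nonneg.mpr hrs; positivity) ((mul_nonneg hc (exp_nonneg _)).trans hexp)

end

theorem stmt7_general (c : ℕ → ℝ) (hc_pos : ∀ j, 0 < c j) (hc_anti : Antitone c)
    (hc2 : ¬ Summable fun j => (c j) ^ 2)
    {Ω : Type*} [MeasurableSpace Ω] (μ : Measure Ω) [IsProbabilityMeasure μ]
    (ξ : ℕ → Ω → ℝ) (hmeas : ∀ j, Measurable (ξ j))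
    (hindep : ProbabilityTheory.iIndepFun ξ μ)
    (hdist : ∀ j, ∀ t : ℝ, 0 ≤ t →
      μ {ω | ξ j ω ≤ t} = ENNReal.ofReal (1 - Real.exp (-(c j) * t))) :
    ∀ r s : ℝ, 0 ≤ r → r < s →
      ∀ᵐ ω ∂μ, (∑' j, ENNReal.ofReal (if ξ j ω ∈ Set.Icc r s then c j else 0)) = ⊤ := by
  intro r s hr hrs
  set f : ℕ → Ω → ℝ := fun j => (ξ j ⁻¹' Set.Icc r s).indicator fun _ => c j
  have hf : ∀ j, Measurable (f j) := fun j => measurable_const.indicator (hmeas j measurableSet_Icc)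
  have hf_indep : iIndepFun f μ :=
    hindep.comp _ fun j => measurable_const.indicator measurableSet_Icc
  set b : ℕ → ℝ := fun j => 1 - mgf (f j) μ (-1)
  set K := (s - r) * exp (-c 0 * (1 + s))
  have hK : 0 < K := mul_pos (sub_pos.mpr hrs) (exp_pos _)
  have hb_ge : ∀ j, K * c j ^ 2 ≤ b j := fun j =>
    mul_sq_le_one_sub_mgf_indicator_preimage_Icc (hmeas j) (hc_pos j).le
      (hc_anti (Nat.zero_le j)) hr hrs.le (hdist j)
  have hb0 : ∀ j, 0 ≤ b j := fun j => (by positivity : 0 ≤ K * c j ^ 2).trans (hb_ge j)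
  have hb1 : ∀ j, b j ≤ 1 := fun j => sub_le_self _ mgf_nonneg
  have hb : ¬ Summable b := fun hsum => hc2 <| (hsum.div_const K).of_nonneg_of_le
    (fun j => sq_nonneg _) fun j => (le_div_iff₀' hK).mpr (hb_ge j)
  have hmgf : Tendsto (fun n => mgf (∑ j ∈ range n, f j) μ (-1)) atTop (𝓝 0) := by
    simpa only [hf_indep.mgf_sum hf, b, sub_sub_cancel]
      using tendsto_prod_range_one_sub_zero_of_not_summable hb0 hb1 hb
  filter_upwards [ae_tsum_ofReal_eq_top_of_tendsto_mgf hf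
    (fun j => Set.indicator_nonneg fun _ _ => (hc_pos j).le) hmgf] with ω hω
  convert hω using 3 with j
  by_cases h : ξ j ω ∈ Set.Icc r s <;> simp [f, h]

/-- Let `(c_j)` be a non-increasing sequence of positive reals with
`Σ c_j³ < ∞` and `Σ c_j² = ∞`, and let `(ξ_j)` be independent random variables with `ξ_j`
exponential of rate `c_j` (characterized by its CDF `P(ξ_j ≤ t) = 1 − e^{−c_j t}` for `t ≥ 0`).
Then for every `0 ≤ r < s`, almost surely `Σ_j c_j 1{r ≤ ξ_j ≤ s} = ∞`. -/
theorem stmt7 (c : ℕ → ℝ) (hc_pos : ∀ j, 0 < c j) (hc_anti : Antitone c)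
    (hc3 : Summable fun j => (c j) ^ 3) (hc2 : ¬ Summable fun j => (c j) ^ 2)
    {Ω : Type*} [MeasurableSpace Ω] (μ : Measure Ω) [IsProbabilityMeasure μ]
    (ξ : ℕ → Ω → ℝ) (hmeas : ∀ j, Measurable (ξ j))
    (hindep : ProbabilityTheory.iIndepFun ξ μ)
    (hdist : ∀ j, ∀ t : ℝ, 0 ≤ t →
      μ {ω | ξ j ω ≤ t} = ENNReal.ofReal (1 - Real.exp (-(c j) * t))) :
    ∀ r s : ℝ, 0 ≤ r → r < s →
      ∀ᵐ ω ∂μ, (∑' j, ENNReal.ofReal (if ξ j ω ∈ Set.Icc r s then c j else 0)) = ⊤ :=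
  stmt7_general c hc_pos hc_anti hc2 μ ξ hmeas hindep hdist
end

section
/- Assume additionally that f is strictly positive on [ι,∞). Fix n ≥ 2 and recall w_1 = inf{ s ≥ 0 : 1 − F(s) ≤ 1/n }. For each y ∈ [ι, w_1) let h_n(y) denote the unique real number ≥ y with ∫_y^{h_n(y)} f(u) du = 1/n. Then the function g_n(y) := y / ∫_y^{h_n(y)} u f(u) du is non-increasing on [ι, w_1). -/
open MeasureTheory Set

/-- The inverse of a strictly monotone surjective function on a compact interval
is continuous. -/
lemma aux_inv_cont {Q : ℝ → ℝ} {p q : ℝ} (hpq : p ≤ q) (hmono : StrictMonoOn Q (Icc p q))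
    (hsurj : ∀ v ∈ Icc (Q p) (Q q), ∃ x ∈ Icc p q, Q x = v) :
    ContinuousOn Q (Icc p q) := by
  intro s hs
  have hps : p ≤ s := hs.1
  have hsq : s ≤ q := hs.2
  have hp : p ∈ Icc p q := ⟨le_rfl, hpq⟩
  have hq : q ∈ Icc p q := ⟨hpq, le_rfl⟩
  have hL : ContinuousWithinAt Q (Icc p q ∩ Iic s) s := by
    rcases eq_or_lt_of_le hps with hps' | hps'
    · refine continuousWithinAt_singleton.mono ?_
      intro y hy
      have : y = s := le_antisymm hy.2 (hps' ▸ hy.1.1)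
      simp [this]
    · have h1 : ContinuousWithinAt Q (Iic s) s := by
        refine hmono.continuousWithinAt_left_of_exists_between
          (Icc_mem_nhdsLE_of_mem ⟨hps', hsq⟩) ?_
        intro t ht
        have hQps : Q p < Q s := hmono hp hs hps'
        have hv1 : max t (Q p) < Q s := max_lt ht hQps
        obtain ⟨cc, hcc, hQcc⟩ := hsurj (max t (Q p))
          ⟨le_max_right _ _, hv1.le.trans (hmono.monotoneOn hs hq hsq)⟩
        exact ⟨cc, hcc, by rw [hQcc]; exact ⟨le_max_left _ _, hv1⟩⟩
      exact h1.mono inter_subset_right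
  have hR : ContinuousWithinAt Q (Icc p q ∩ Ici s) s := by
    rcases eq_or_lt_of_le hsq with hsq' | hsq'
    · refine continuousWithinAt_singleton.mono ?_
      intro y hy
      have : y = s := le_antisymm (hsq' ▸ hy.1.2) hy.2
      simp [this]
    · have h1 : ContinuousWithinAt Q (Ici s) s := by
        refine hmono.continuousWithinAt_right_of_exists_between
          (Icc_mem_nhdsGE_of_mem ⟨hps, hsq'⟩) ?_
        intro t ht
        have hQsq : Q s < Q q := hmono hs hq hsq'
        have hv1 : Q s < min t (Q q) := lt_min ht hQsq
        obtain ⟨cc, hcc, hQcc⟩ := hsurj (min t (Q q))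
          ⟨(hmono.monotoneOn hp hs hps).trans hv1.le, min_le_right _ _⟩
        exact ⟨cc, hcc, by rw [hQcc]; exact ⟨hv1, min_le_left _ _⟩⟩
      exact h1.mono inter_subset_right
  refine (hL.union hR).mono ?_
  intro y hy
  rcases le_total y s with h' | h'
  · exact Or.inl ⟨hy, h'⟩
  · exact Or.inr ⟨hy, h'⟩

/-- Bounds on the mass of `f` over `[p,q]` when `x * f x` is antitone. -/
lemma aux_est {ι : ℝ} (hι : 0 < ι) {f : ℝ → ℝ}
    (hf_cont : ContinuousOn f (Set.Ici ι))
    (hxf : AntitoneOn (fun x => x * f x) (Set.Ici ι))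
    {p q : ℝ} (hp : ι ≤ p) (hpq : p ≤ q) :
    q * f q * Real.log (q / p) ≤ (∫ u in p..q, f u) ∧
      (∫ u in p..q, f u) ≤ p * f p * Real.log (q / p) := by
  have hq : ι ≤ q := hp.trans hpq
  have hp0 : 0 < p := hι.trans_le hp
  have hIcc : Icc p q ⊆ Ici ι := fun x hx => hp.trans hx.1
  have h0 : (0:ℝ) ∉ Set.uIcc p q := by
    rw [uIcc_of_le hpq]
    intro h0m
    exact absurd h0m.1 (not_le.mpr hp0)
  have hfint : IntervalIntegrable f volume p q := by
    apply ContinuousOn.intervalIntegrable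
    refine hf_cont.mono ?_
    rw [uIcc_of_le hpq]; exact hIcc
  have hinv : ∀ C : ℝ, IntervalIntegrable (fun u => C * (1/u)) volume p q := by
    intro C
    apply ContinuousOn.intervalIntegrable
    rw [uIcc_of_le hpq]
    exact continuousOn_const.mul
      (continuousOn_const.div continuousOn_id fun x hx => (hp0.trans_le hx.1).ne')
  have hlog : ∀ C : ℝ, (∫ u in p..q, C * (1/u)) = C * Real.log (q / p) := by
    intro C
    rw [intervalIntegral.integral_const_mul, integral_one_div h0]
  constructor
  · rw [← hlog (q * f q)]
    refine intervalIntegral.integral_mono_on hpq (hinv _) hfint ?_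
    intro u hu
    have hu0 : 0 < u := hp0.trans_le hu.1
    have huf : q * f q ≤ u * f u := hxf (hIcc hu) hq hu.2
    rw [mul_one_div, div_le_iff₀ hu0]
    calc q * f q ≤ u * f u := huf
    _ = f u * u := mul_comm _ _
  · rw [← hlog (p * f p)]
    refine intervalIntegral.integral_mono_on hpq hfint (hinv _) ?_
    intro u hu
    have hu0 : 0 < u := hp0.trans_le hu.1
    have huf : u * f u ≤ p * f p := hxf hp (hIcc hu) hu.1
    rw [mul_one_div, le_div_iff₀ hu0]
    calc f u * u = u * f u := mul_comm _ _
    _ ≤ p * f p := huf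

/-- Core inequality: equal masses force comparable ratios. -/
lemma aux_core {ι : ℝ} (hι : 0 < ι) {f : ℝ → ℝ}
    (hf_cont : ContinuousOn f (Set.Ici ι))
    (hf_pos : ∀ x, ι ≤ x → 0 < f x)
    (hxf : AntitoneOn (fun x => x * f x) (Set.Ici ι))
    {a b x z : ℝ} (hia : ι ≤ a) (hab : a ≤ b) (hax : a ≤ x) (hbz : b ≤ z) (hxz : x ≤ z)
    (hmass : (∫ u in a..b, f u) = ∫ u in x..z, f u) :
    b * x ≤ a * z := by
  have ha0 : 0 < a := hι.trans_le hia
  have hib : ι ≤ b := hia.trans hab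
  have hix : ι ≤ x := hia.trans hax
  have hiz : ι ≤ z := hib.trans hbz
  have hb0 : 0 < b := hι.trans_le hib
  have hx0 : 0 < x := hι.trans_le hix
  have hz0 : 0 < z := hι.trans_le hiz
  rcases le_total b x with hbx | hxb
  · have h1 := (aux_est hι hf_cont hxf hia hab).1
    have h2 := (aux_est hι hf_cont hxf hix hxz).2
    have h3 : x * f x ≤ b * f b := hxf hib hix hbx
    have hfb : 0 < b * f b := mul_pos hb0 (hf_pos b hib)
    have hlog2 : 0 ≤ Real.log (z / x) := Real.log_nonneg ((one_le_div hx0).mpr hxz)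
    have key : Real.log (b / a) ≤ Real.log (z / x) := by
      have hmm : b * f b * Real.log (b / a) ≤ b * f b * Real.log (z / x) := by
        calc b * f b * Real.log (b / a) ≤ ∫ u in a..b, f u := h1
        _ = ∫ u in x..z, f u := hmass
        _ ≤ x * f x * Real.log (z / x) := h2
        _ ≤ b * f b * Real.log (z / x) := mul_le_mul_of_nonneg_right h3 hlog2
      exact le_of_mul_le_mul_left (by linarith) hfb
    have hd : b / a ≤ z / x := by
      rwa [Real.log_le_log_iff (div_pos hb0 ha0) (div_pos hz0 hx0)] at key
    rw [div_le_div_iff₀ ha0 hx0] at hd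
    linarith [hd, mul_comm z a]
  · have hfi : ∀ p q : ℝ, ι ≤ p → ι ≤ q → IntervalIntegrable f volume p q := by
      intro p q hp hq
      apply ContinuousOn.intervalIntegrable
      refine hf_cont.mono ?_
      intro u hu
      rcases le_total p q with h' | h'
      · rw [uIcc_of_le h'] at hu; exact hp.trans hu.1
      · rw [uIcc_of_ge h'] at hu; exact hq.trans hu.1
    have hmass2 : (∫ u in a..x, f u) = ∫ u in b..z, f u := by
      have e1 : (∫ u in a..b, f u) + ∫ u in b..z, f u = ∫ u in a..z, f u :=
        intervalIntegral.integral_add_adjacent_intervals (hfi a b hia hib) (hfi b z hib hiz)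
      have e2 : (∫ u in a..x, f u) + ∫ u in x..z, f u = ∫ u in a..z, f u :=
        intervalIntegral.integral_add_adjacent_intervals (hfi a x hia hix) (hfi x z hix hiz)
      linarith [e1, e2, hmass]
    have h1 := (aux_est hι hf_cont hxf hia hax).1
    have h2 := (aux_est hι hf_cont hxf hib hbz).2
    have h3 : b * f b ≤ x * f x := hxf hix hib hxb
    have hfx : 0 < x * f x := mul_pos hx0 (hf_pos x hix)
    have hlog2 : 0 ≤ Real.log (z / b) := Real.log_nonneg ((one_le_div hb0).mpr hbz)
    have key : Real.log (x / a) ≤ Real.log (z / b) := by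
      have hmm : x * f x * Real.log (x / a) ≤ x * f x * Real.log (z / b) := by
        calc x * f x * Real.log (x / a) ≤ ∫ u in a..x, f u := h1
        _ = ∫ u in b..z, f u := hmass2
        _ ≤ b * f b * Real.log (z / b) := h2
        _ ≤ x * f x * Real.log (z / b) := mul_le_mul_of_nonneg_right h3 hlog2
      exact le_of_mul_le_mul_left (by linarith) hfx
    have hd : x / a ≤ z / b := by
      rwa [Real.log_le_log_iff (div_pos hx0 ha0) (div_pos hz0 hb0)] at key
    rw [div_le_div_iff₀ ha0 hb0] at hd
    linarith [hd, mul_comm x b, mul_comm z a]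

section Main

variable {ι : ℝ} {f : ℝ → ℝ}

theorem stmt9' (hι : 0 < ι)
    (hf_cont : ContinuousOn f (Set.Ici ι))
    (hf_nonneg : ∀ x, 0 ≤ f x)
    (hf_pos : ∀ x, ι ≤ x → 0 < f x)
    (hxf : AntitoneOn (fun x => x * f x) (Set.Ici ι))
    (n : ℕ) (hn : 2 ≤ n)
    (w1 : ℝ)
    (h : ℝ → ℝ)
    (hh : ∀ y ∈ Set.Ico ι w1, y ≤ h y ∧ (∫ u in y..(h y), f u) = 1 / n) :
    AntitoneOn (fun y => y / ∫ u in y..(h y), u * f u) (Set.Ico ι w1) := by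
  have hn0 : (0:ℝ) < (n:ℝ) := by
    have : (0:ℕ) < n := lt_of_lt_of_le (by norm_num) hn
    exact_mod_cast this
  have hc : (0:ℝ) < 1 / n := by positivity
  intro a ha b hb hab
  obtain ⟨haA, hMa⟩ := hh a ha
  obtain ⟨hbB, hMb⟩ := hh b hb
  set A := h a with hA
  set B := h b with hB'
  have hιa : ι ≤ a := ha.1
  have hιb : ι ≤ b := hb.1
  have ha0 : 0 < a := lt_of_lt_of_le hι hιa
  have hb0 : 0 < b := lt_of_lt_of_le hι hιb
  have hιA : ι ≤ A := hιa.trans haA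
  have hιB : ι ≤ B := hιb.trans hbB
  -- integrability helpers
  have hfi : ∀ p q : ℝ, ι ≤ p → ι ≤ q → IntervalIntegrable f volume p q := by
    intro p q hp hq
    apply ContinuousOn.intervalIntegrable
    refine hf_cont.mono ?_
    intro u hu
    rcases le_total p q with h' | h'
    · rw [uIcc_of_le h'] at hu; exact hp.trans hu.1
    · rw [uIcc_of_ge h'] at hu; exact hq.trans hu.1
  have hufi : ∀ p q : ℝ, ι ≤ p → ι ≤ q → IntervalIntegrable (fun u => u * f u) volume p q := by
    intro p q hp hq
    have hsub : Set.uIcc p q ⊆ Ici ι := by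
      intro u hu
      rcases le_total p q with h' | h'
      · rw [uIcc_of_le h'] at hu; exact hp.trans hu.1
      · rw [uIcc_of_ge h'] at hu; exact hq.trans hu.1
    exact (continuousOn_id.mul (hf_cont.mono hsub)).intervalIntegrable
  have hadd : ∀ p q r : ℝ, ι ≤ p → ι ≤ q → ι ≤ r →
      (∫ u in p..q, f u) + ∫ u in q..r, f u = ∫ u in p..r, f u := by
    intro p q r hp hq hr
    exact intervalIntegral.integral_add_adjacent_intervals (hfi p q hp hq) (hfi q r hq hr)
  -- strict inequalities a < A, b < B
  have haA' : a < A := by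
    rcases eq_or_lt_of_le haA with h' | h'
    · exfalso
      rw [← h', intervalIntegral.integral_same] at hMa
      linarith
    · exact h'
  have hbB' : b < B := by
    rcases eq_or_lt_of_le hbB with h' | h'
    · exfalso
      rw [← h', intervalIntegral.integral_same] at hMb
      linarith
    · exact h'
  -- A ≤ B
  have hab_mass : 0 ≤ ∫ u in a..b, f u :=
    intervalIntegral.integral_nonneg hab (fun u _ => hf_nonneg u)
  have hAB : A ≤ B := by
    by_contra hcon
    push_neg at hcon
    have h1 := hadd a b B hιa hιb hιB
    have h2 := hadd a B A hιa hιB hιA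
    have h3 : 0 < ∫ u in B..A, f u :=
      intervalIntegral.intervalIntegral_pos_of_pos_on (hfi B A hιB hιA)
        (fun u hu => hf_pos u (hιB.trans hu.1.le)) hcon
    rw [hMb] at h1
    rw [hMa] at h2
    linarith
  have haB : a ≤ B := haA.trans hAB
  -- the primitive M
  have hMcont : ContinuousOn (fun x => ∫ t in a..x, f t) (Icc a B) := by
    have hint : IntegrableOn f (Set.uIcc a B) volume := by
      rw [uIcc_of_le haB]
      exact (hf_cont.mono (fun u hu => hιa.trans hu.1)).integrableOn_Icc
    have := intervalIntegral.continuousOn_primitive_interval (μ := volume) hint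
    rwa [uIcc_of_le haB] at this
  have hMdiff : ∀ p q : ℝ, a ≤ p → p < q → q ≤ B →
      (∫ t in a..p, f t) < ∫ t in a..q, f t := by
    intro p q hp hpq hq
    have hιp : ι ≤ p := hιa.trans hp
    have hιq : ι ≤ q := hιp.trans hpq.le
    have e := hadd a p q hιa hιp hιq
    have hpos : 0 < ∫ u in p..q, f u :=
      intervalIntegral.intervalIntegral_pos_of_pos_on (hfi p q hιp hιq)
        (fun u hu => hf_pos u (hιp.trans hu.1.le)) hpq
    linarith
  have hMmono : StrictMonoOn (fun x => ∫ t in a..x, f t) (Icc a B) :=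
    fun p hp q hq hpq => hMdiff p q hp.1 hpq hq.2
  have hMmono' : MonotoneOn (fun x => ∫ t in a..x, f t) (Icc a B) := hMmono.monotoneOn
  -- values of M
  have hMa0 : (∫ t in a..a, f t) = 0 := intervalIntegral.integral_same
  have hMA : (∫ t in a..A, f t) = 1 / n := hMa
  have hMB : (∫ t in a..B, f t) = (∫ t in a..b, f t) + 1 / n := by
    have := hadd a b B hιa hιb hιB
    rw [hMb] at this
    linarith
  set d : ℝ := ∫ t in a..b, f t with hd
  have hd0 : 0 ≤ d := hab_mass
  have hdc0 : (0:ℝ) ≤ d + 1 / n := by linarith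
  -- membership of M-values
  have hMmem : ∀ x ∈ Icc a B, (∫ t in a..x, f t) ∈ Icc (0:ℝ) (d + 1 / n) := by
    intro x hx
    constructor
    · have h1 : (∫ t in a..a, f t) ≤ ∫ t in a..x, f t :=
        hMmono' (⟨le_rfl, haB⟩ : a ∈ Icc a B) hx hx.1
      rwa [hMa0] at h1
    · have h1 : (∫ t in a..x, f t) ≤ ∫ t in a..B, f t :=
        hMmono' hx (⟨haB, le_rfl⟩ : B ∈ Icc a B) hx.2
      rwa [hMB] at h1
  -- surjectivity and the inverse Q
  have hsurj0 : Icc (0:ℝ) (d + 1 / n) ⊆ (fun x => ∫ t in a..x, f t) '' Icc a B := by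
    have := intermediate_value_Icc haB hMcont
    rw [hMa0, hMB] at this
    exact this
  have hexists : ∀ s : ℝ, ∃ x, s ∈ Icc (0:ℝ) (d + 1 / n) →
      x ∈ Icc a B ∧ (∫ t in a..x, f t) = s := by
    intro s
    by_cases hs : s ∈ Icc (0:ℝ) (d + 1 / n)
    · obtain ⟨x, hx, hMx⟩ := hsurj0 hs
      exact ⟨x, fun _ => ⟨hx, hMx⟩⟩
    · exact ⟨a, fun hs' => absurd hs' hs⟩
  choose Q hQ using hexists
  have hQmem : ∀ s ∈ Icc (0:ℝ) (d + 1 / n), Q s ∈ Icc a B := fun s hs => (hQ s hs).1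
  have hQMs : ∀ s ∈ Icc (0:ℝ) (d + 1 / n), (∫ t in a..(Q s), f t) = s := fun s hs => (hQ s hs).2
  have hQM : ∀ x ∈ Icc a B, Q (∫ t in a..x, f t) = x := by
    intro x hx
    have h1 := hQMs _ (hMmem x hx)
    exact hMmono.injOn (hQmem _ (hMmem x hx)) hx h1
  have hQsm : StrictMonoOn Q (Icc (0:ℝ) (d + 1 / n)) := by
    intro s hs t ht hst
    by_contra hle
    push_neg at hle
    have hts : (∫ t in a..(Q t), f t) ≤ ∫ t in a..(Q s), f t :=
      hMmono' (hQmem t ht) (hQmem s hs) hle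
    rw [hQMs s hs, hQMs t ht] at hts
    exact absurd hts (not_le.mpr hst)
  have hQ0 : Q 0 = a := by
    have := hQM a ⟨le_rfl, haB⟩
    rwa [hMa0] at this
  have hQtop : Q (d + 1 / n) = B := by
    have := hQM B ⟨haB, le_rfl⟩
    rwa [hMB] at this
  have hQcont : ContinuousOn Q (Icc (0:ℝ) (d + 1 / n)) := by
    apply aux_inv_cont hdc0 hQsm
    intro v hv
    rw [hQ0, hQtop] at hv
    exact ⟨∫ t in a..v, f t, hMmem v hv, hQM v hv⟩
  -- change of variables
  have hCV : ∀ y Y : ℝ, a ≤ y → y ≤ Y → Y ≤ B →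
      (∫ u in y..Y, u * f u) = ∫ s in (∫ t in a..y, f t)..(∫ t in a..Y, f t), Q s := by
    intro y Y hay hyY hYB
    have hιy : ι ≤ y := hιa.trans hay
    have huIcc : Set.uIcc y Y = Icc y Y := uIcc_of_le hyY
    have hsub : Icc y Y ⊆ Icc a B := Icc_subset_Icc hay hYB
    have h1 : ContinuousOn (fun x => ∫ t in a..x, f t) (Set.uIcc y Y) := by
      rw [huIcc]; exact hMcont.mono hsub
    have h2 : ∀ x ∈ Ioo (min y Y) (max y Y),
        HasDerivWithinAt (fun x => ∫ t in a..x, f t) (f x) (Ioi x) x := by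
      rw [min_eq_left hyY, max_eq_right hyY]
      intro x hx
      have hιx : ι < x := lt_of_le_of_lt hιy hx.1
      have hca : ContinuousAt f x := hf_cont.continuousAt (Ici_mem_nhds hιx)
      have hmeas : StronglyMeasurableAtFilter f (nhds x) volume :=
        ⟨Ici ι, Ici_mem_nhds hιx, hf_cont.aestronglyMeasurable measurableSet_Ici⟩
      exact (intervalIntegral.integral_hasDerivAt_right
        (hfi a x hιa hιx.le) hmeas hca).hasDerivWithinAt
    have h3 : ContinuousOn f (Set.uIcc y Y) := by
      rw [huIcc]; exact hf_cont.mono (fun u hu => hιy.trans hu.1)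
    have h4 : ContinuousOn Q ((fun x => ∫ t in a..x, f t) '' Set.uIcc y Y) := by
      refine hQcont.mono ?_
      rw [huIcc]
      rintro _ ⟨x, hx, rfl⟩
      exact hMmem x (hsub hx)
    have hcv := intervalIntegral.integral_comp_smul_deriv'' h1 h2 h3 h4
    rw [← hcv]
    apply intervalIntegral.integral_congr
    intro x hx
    rw [huIcc] at hx
    have hqx : Q (∫ t in a..x, f t) = x := hQM x (hsub hx)
    show x * f x = f x • (Q ∘ fun x => ∫ t in a..x, f t) x
    simp only [Function.comp_apply, smul_eq_mul, hqx]
    ring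
  have hIa : (∫ u in a..A, u * f u) = ∫ s in (0:ℝ)..(1 / n : ℝ), Q s := by
    have := hCV a A le_rfl haA hAB
    rwa [hMa0, hMA] at this
  have hIb : (∫ u in b..B, u * f u) = ∫ s in d..(d + 1 / n), Q s := by
    have := hCV b B hab hbB le_rfl
    rwa [hMB, ← hd] at this
  -- positivity of the two integrals
  have hIapos : 0 < ∫ u in a..A, u * f u := by
    refine intervalIntegral.intervalIntegral_pos_of_pos_on (hufi a A hιa hιA) ?_ haA'
    intro u hu
    have : ι ≤ u := hιa.trans hu.1.le
    exact mul_pos (hι.trans_le this) (hf_pos u this)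
  have hIbpos : 0 < ∫ u in b..B, u * f u := by
    refine intervalIntegral.intervalIntegral_pos_of_pos_on (hufi b B hιb hιB) ?_ hbB'
    intro u hu
    have : ι ≤ u := hιb.trans hu.1.le
    exact mul_pos (hι.trans_le this) (hf_pos u this)
  -- shift the second integral
  have hshift : (∫ s in d..(d + 1 / n), Q s) = ∫ s in (0:ℝ)..(1 / n : ℝ), Q (s + d) := by
    have := intervalIntegral.integral_comp_add_right (a := (0:ℝ)) (b := 1 / n) (f := Q) d
    rw [zero_add, add_comm (1 / n : ℝ) d] at this
    exact this.symm
  -- pointwise core inequality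
  have hkey : ∀ s ∈ Icc (0:ℝ) (1 / n : ℝ), b * Q s ≤ a * Q (s + d) := by
    intro s hs
    have hs1 : s ∈ Icc (0:ℝ) (d + 1 / n) := ⟨hs.1, by linarith [hs.2]⟩
    have hs2 : s + d ∈ Icc (0:ℝ) (d + 1 / n) := ⟨by linarith [hs.1], by linarith [hs.2]⟩
    have hxmem := hQmem s hs1
    have hzmem := hQmem _ hs2
    have hMx : (∫ t in a..(Q s), f t) = s := hQMs s hs1
    have hMz : (∫ t in a..(Q (s + d)), f t) = s + d := hQMs _ hs2
    have hxz : Q s ≤ Q (s + d) := hQsm.monotoneOn hs1 hs2 (by linarith [hd0])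
    have hbz : b ≤ Q (s + d) := by
      by_contra hzb
      push_neg at hzb
      have hlt : (∫ t in a..(Q (s + d)), f t) < ∫ t in a..b, f t :=
        hMmono hzmem (⟨hab, hbB⟩ : b ∈ Icc a B) hzb
      rw [hMz, ← hd] at hlt
      linarith [hs.1]
    have hmassz : (∫ u in (Q s)..(Q (s + d)), f u) = d := by
      have e := hadd a (Q s) (Q (s + d)) hιa (hιa.trans hxmem.1) (hιa.trans hzmem.1)
      rw [hMx, hMz] at e
      linarith
    have hmassEq : (∫ u in a..b, f u) = ∫ u in (Q s)..(Q (s + d)), f u := by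
      rw [hmassz, hd]
    exact aux_core hι hf_cont hf_pos hxf hιa hab hxmem.1 hbz hxz hmassEq
  -- integrate the pointwise inequality
  have hmono2 : (∫ s in (0:ℝ)..(1 / n : ℝ), b * Q s) ≤
      ∫ s in (0:ℝ)..(1 / n : ℝ), a * Q (s + d) := by
    refine intervalIntegral.integral_mono_on hc.le ?_ ?_ hkey
    · apply ContinuousOn.intervalIntegrable
      rw [uIcc_of_le hc.le]
      exact continuousOn_const.mul (hQcont.mono (Icc_subset_Icc le_rfl (by linarith)))
    · apply ContinuousOn.intervalIntegrable
      rw [uIcc_of_le hc.le]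
      refine continuousOn_const.mul ?_
      refine hQcont.comp ((continuous_id.add continuous_const).continuousOn) ?_
      intro s hs
      simp only [Set.mem_Icc] at hs ⊢
      constructor <;> linarith
  rw [intervalIntegral.integral_const_mul, intervalIntegral.integral_const_mul] at hmono2
  -- final assembly
  show b / (∫ u in b..B, u * f u) ≤ a / (∫ u in a..A, u * f u)
  rw [div_le_div_iff₀ hIbpos hIapos]
  rw [hIa, hIb, hshift]
  exact hmono2

end Main

/-- Under the standing assumptions on `F`, and assuming moreover that the
density `f` is strictly positive on `[ι,∞)`: fix `n ≥ 2` and let `w_1` be as usual.  If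
`h : ℝ → ℝ` satisfies, for every `y ∈ [ι, w_1)`, `h(y) ≥ y` and `∫_y^{h(y)} f(u) du = 1/n`
(this determines `h(y)` uniquely), then `g_n(y) = y / ∫_y^{h(y)} u f(u) du` is non-increasing
on `[ι, w_1)`. -/
theorem stmt9 (τ ι cF : ℝ) (hτ1 : 3 < τ) (hτ2 : τ < 4) (hι : 0 < ι) (hcF : 0 < cF)
    (F f : ℝ → ℝ)
    (hf_cont : ContinuousOn f (Set.Ici ι))
    (hf_nonneg : ∀ x, 0 ≤ f x)
    (hf_pos : ∀ x, ι ≤ x → 0 < f x)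
    (hf_zero : ∀ x, x < ι → f x = 0)
    (hF : ∀ x, F x = ∫ t in Set.Iic x, f t)
    (hF_total : ∫ t, f t = 1)
    (hxf : AntitoneOn (fun x => x * f x) (Set.Ici ι))
    (htail : Filter.Tendsto (fun x => x ^ (τ - 1) * (1 - F x)) Filter.atTop (nhds cF))
    (n : ℕ) (hn : 2 ≤ n)
    (w1 : ℝ) (hw1 : w1 = sInf {s : ℝ | 0 ≤ s ∧ 1 - F s ≤ (1 : ℝ) / n})
    (h : ℝ → ℝ)
    (hh : ∀ y ∈ Set.Ico ι w1, y ≤ h y ∧ (∫ u in y..(h y), f u) = 1 / n) :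
    AntitoneOn (fun y => y / ∫ u in y..(h y), u * f u) (Set.Ico ι w1) :=
  stmt9' hι hf_cont hf_nonneg hf_pos hxf n hn w1 h hh
end

section
/- Fix n ≥ 2, positive weights w_1,…,w_n with ℓ := Σ_{i=1}^n w_i, and β > 0. Let G be a random graph on vertex set [n] in which each pair {i,j} with i ≠ j is an edge independently (over distinct pairs) with some probability q_{ij} satisfying q_{ij} ≤ β w_i w_j / ℓ. Set ν := (Σ_{k=1}^n w_k²)/ℓ. Then for every nonempty A ⊆ [n], every j ∈ [n] \ A, and every integer l ≥ 1: P( dist_G(A, j) = l ) ≤ β ( Σ_{a∈A} w_a ) (w_j/ℓ) (β ν)^{l−1}, where dist_G(A, j) := min_{a∈A} d_G(a, j) with d_G the graph distance in G (taken to be ∞ if j is not connected to any vertex of A). -/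
open MeasureTheory ProbabilityTheory

/-- The simple graph on `Fin n` determined by a configuration of edge indicators indexed by
unordered pairs. -/
def graphOfConfig {n : ℕ} (ω : Sym2 (Fin n) → Bool) : SimpleGraph (Fin n) where
  Adj i j := i ≠ j ∧ ω s(i, j) = true
  symm := by
    constructor
    intro i j h
    exact ⟨h.1.symm, by rw [Sym2.eq_swap]; exact h.2⟩
  loopless := by constructor; intro i h; exact h.1 rfl

/-! If `d_G(A, j) = l`, some `a ∈ A` is joined to `j` by a path `a = p₀, …, p_l = j` with
distinct vertices, all of whose `l` edges are present. These edges are distinct, so by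
independence the path is present with probability at most `∏ q_{pᵢ pᵢ₊₁}`. A union bound over
all such paths, enlarged to all tuples `p₀, …, p_l`, gives `∑_{a ∈ A} (Qˡ)_{aj}` for the matrix
`Q = (β/ℓ) w wᵀ` of edge bounds, and since `Q` has rank one,
`Qˡ = (β/ℓ)ˡ (Σ w_k²)^{l-1} w wᵀ`. -/

open Finset

namespace SimpleGraph

variable {V : Type*} {G : SimpleGraph V}

theorem exists_injective_chain_of_edist_eq {u v : V} {l : ℕ} (h : G.edist u v = l) :
    ∃ p : Fin (l + 1) → V, Function.Injective p ∧ p 0 = u ∧ p (Fin.last l) = v ∧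
      ∀ i : Fin l, G.Adj (p i.castSucc) (p i.succ) := by
  obtain ⟨q, hq⟩ := exists_walk_of_edist_eq_coe h
  have hdist : G.dist u v = l := by
    have hreach := reachable_of_edist_ne_top (h ▸ ENat.natCast_ne_top l)
    exact_mod_cast hreach.coe_dist_eq_edist.trans h
  have hchains : q.IsPath := q.isPath_of_length_eq_dist (hq.trans hdist.symm)
  refine ⟨fun i => q.getVert i, fun i k hik => Fin.ext ?_, q.getVert_zero, ?_, fun i => ?_⟩
  · exact hchains.getVert_injOn (by simp only [Set.mem_ofPred_eq]; omega)
      (by simp only [Set.mem_ofPred_eq]; omega) hik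
  · simpa [hq] using q.getVert_length
  · simpa using q.adj_getVert_succ (i := i) (by omega)

end SimpleGraph

namespace Matrix

variable {α R : Type*} [Fintype α] [DecidableEq α]

theorem pow_apply_eq_sum_chains [CommSemiring R] (M : Matrix α α R) (l : ℕ) (a b : α) :
    (M ^ l) a b = ∑ p : Fin (l + 1) → α with p 0 = a ∧ p (Fin.last l) = b,
      ∏ i : Fin l, M (p i.castSucc) (p i.succ) := by
  induction l generalizing a with
  | zero =>
    rcases eq_or_ne a b with rfl | hab
    · rw [pow_zero, one_apply_eq, sum_filter, ← (Equiv.funUnique (Fin 1) α).symm.sum_comp]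
      simp [Fin.last]
    · rw [pow_zero, one_apply_ne hab,
        filter_false_of_mem fun p _ ⟨ha, hb⟩ => hab (ha ▸ hb), sum_empty]
  | succ l ih =>
    rw [pow_succ', mul_apply, sum_filter, ← (Fin.consEquiv fun _ => α).sum_comp,
      Fintype.sum_prod_type]
    simp only [ih, sum_filter, mul_sum]
    rw [sum_comm]
    simp [Fin.prod_univ_succ, Fin.consEquiv, ite_and]

theorem sum_injective_chains_le_pow_apply [CommSemiring R] [PartialOrder R] [IsOrderedRing R]
    {M : Matrix α α R} (hM : ∀ i j, 0 ≤ M i j) (l : ℕ) (a b : α) :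
    ∑ p : Fin (l + 1) → α with (p 0 = a ∧ p (Fin.last l) = b) ∧ Function.Injective p,
      ∏ i : Fin l, M (p i.castSucc) (p i.succ) ≤ (M ^ l) a b := by
  rw [pow_apply_eq_sum_chains, ← filter_filter]
  exact sum_le_sum_of_subset_of_nonneg (filter_subset _ _)
    fun p _ _ => prod_nonneg fun i _ => hM _ _

theorem vecMulVec_pow_succ [CommSemiring R] (x y : α → R) (k : ℕ) :
    vecMulVec x y ^ (k + 1) = (y ⬝ᵥ x) ^ k • vecMulVec x y := by
  induction k with
  | zero => simp
  | succ k ih =>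
    rw [pow_succ, ih, smul_mul_assoc, vecMulVec_mul_vecMulVec, vecMulVec_smul, smul_smul, pow_succ]

end Matrix

theorem measure_iInter_chain_edges_le {α Ω : Type*} [MeasurableSpace Ω] {μ : Measure Ω}
    {X : Sym2 α → Ω → Bool} (hindep : iIndepFun (fun e : {e : Sym2 α // ¬ e.IsDiag} => X e.1) μ)
    {q : α → α → ENNReal} (hq : ∀ i j, i ≠ j → μ {ω | X s(i, j) ω = true} ≤ q i j)
    {l : ℕ} {p : Fin (l + 1) → α} (hp : Function.Injective p) :
    μ (⋂ i : Fin l, {ω | X s(p i.castSucc, p i.succ) ω = true})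
      ≤ ∏ i : Fin l, q (p i.castSucc) (p i.succ) := by
  have hne : ∀ i : Fin l, p i.castSucc ≠ p i.succ := fun i h =>
    i.castSucc_lt_succ.ne (hp h)
  let edge : Fin l → {e : Sym2 α // ¬ e.IsDiag} := fun i =>
    ⟨s(p i.castSucc, p i.succ), Sym2.mk_isDiag_iff.not.mpr (hne i)⟩
  have hedge : Function.Injective edge := by
    intro i k hik
    rcases Sym2.eq_iff.mp (congrArg Subtype.val hik) with ⟨h, -⟩ | ⟨h₁, h₂⟩
    · exact Fin.castSucc_injective _ (hp h)
    · have e₁ := congrArg Fin.val (hp h₁)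
      have e₂ := congrArg Fin.val (hp h₂)
      simp only [Fin.val_castSucc, Fin.val_succ] at e₁ e₂
      omega
  calc μ (⋂ i : Fin l, {ω | X s(p i.castSucc, p i.succ) ω = true})
      = ∏ i : Fin l, μ {ω | X s(p i.castSucc, p i.succ) ω = true} :=
        (hindep.precomp hedge).meas_iInter fun _ => ⟨{true}, trivial, rfl⟩
    _ ≤ ∏ i : Fin l, q (p i.castSucc) (p i.succ) :=
        prod_le_prod' fun i _ => hq _ _ (hne i)

theorem measure_iInf_edist_graphOfConfig_eq_le {n : ℕ} {Ω : Type*} [MeasurableSpace Ω]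
    {μ : Measure Ω} {X : Sym2 (Fin n) → Ω → Bool}
    (hindep : iIndepFun (fun e : {e : Sym2 (Fin n) // ¬ e.IsDiag} => X e.1) μ)
    {c : Matrix (Fin n) (Fin n) ℝ} (hc : ∀ i j, 0 ≤ c i j)
    (hq : ∀ i j, i ≠ j → μ {ω | X s(i, j) ω = true} ≤ ENNReal.ofReal (c i j))
    {A : Finset (Fin n)} (hA : A.Nonempty) (j : Fin n) (l : ℕ) :
    μ {ω | (⨅ a ∈ A, (graphOfConfig (fun e => X e ω)).edist a j) = (l : ℕ∞)}
      ≤ ENNReal.ofReal (∑ a ∈ A, (c ^ l) a j) := by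
  let chains : Fin n → Finset (Fin (l + 1) → Fin n) := fun a =>
    {p | (p 0 = a ∧ p (Fin.last l) = j) ∧ Function.Injective p}
  let present : (Fin (l + 1) → Fin n) → Set Ω := fun p =>
    ⋂ i : Fin l, {ω | X s(p i.castSucc, p i.succ) ω = true}
  have hsub : {ω | (⨅ a ∈ A, (graphOfConfig (fun e => X e ω)).edist a j) = (l : ℕ∞)}
      ⊆ ⋃ a ∈ A, ⋃ p ∈ chains a, present p := by
    intro ω hω
    obtain ⟨a, haA, ha⟩ := exists_mem_eq_inf A hA fun a => (graphOfConfig (X · ω)).edist a j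
    replace hω : A.inf (fun a => (graphOfConfig (X · ω)).edist a j) = l := by
      rwa [Finset.inf_eq_iInf]
    obtain ⟨p, hp, hp0, hpl, hadj⟩ :=
      SimpleGraph.exists_injective_chain_of_edist_eq (ha.symm.trans hω)
    simp only [Set.mem_iUnion]
    exact ⟨a, haA, p, by simp [chains, hp, hp0, hpl], Set.mem_iInter.mpr fun i => (hadj i).2⟩
  have hchains : ∀ a, ∑ p ∈ chains a, μ (present p) ≤ ENNReal.ofReal ((c ^ l) a j) := fun a =>
    calc ∑ p ∈ chains a, μ (present p)
        ≤ ∑ p ∈ chains a, ENNReal.ofReal (∏ i : Fin l, c (p i.castSucc) (p i.succ)) :=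
          sum_le_sum fun p hp => (measure_iInter_chain_edges_le hindep hq
            (mem_filter.mp hp).2.2).trans_eq (ENNReal.ofReal_prod_of_nonneg fun _ _ => hc _ _).symm
      _ = ENNReal.ofReal (∑ p ∈ chains a, ∏ i : Fin l, c (p i.castSucc) (p i.succ)) :=
          (ENNReal.ofReal_sum_of_nonneg fun _ _ => prod_nonneg fun _ _ => hc _ _).symm
      _ ≤ ENNReal.ofReal ((c ^ l) a j) :=
          ENNReal.ofReal_le_ofReal (Matrix.sum_injective_chains_le_pow_apply hc l a j)
  calc _ ≤ μ (⋃ a ∈ A, ⋃ p ∈ chains a, present p) := measure_mono hsub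
    _ ≤ ∑ a ∈ A, ∑ p ∈ chains a, μ (present p) :=
        (measure_biUnion_finset_le _ _).trans (sum_le_sum fun _ _ => measure_biUnion_finset_le _ _)
    _ ≤ ∑ a ∈ A, ENNReal.ofReal ((c ^ l) a j) := sum_le_sum fun a _ => hchains a
    _ = ENNReal.ofReal (∑ a ∈ A, (c ^ l) a j) :=
        (ENNReal.ofReal_sum_of_nonneg fun a _ => Matrix.pow_apply_nonneg hc l a j).symm

theorem stmt12_general (n : ℕ) (w : Fin n → ℝ) (hw : ∀ i, 0 < w i) (β : ℝ) (hβ : 0 < β)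
    {Ω : Type*} [MeasurableSpace Ω] (μ : Measure Ω)
    (X : Sym2 (Fin n) → Ω → Bool)
    (hindep : iIndepFun
      (fun e : {e : Sym2 (Fin n) // ¬ e.IsDiag} => X e.1) μ)
    (hq : ∀ i j : Fin n, i ≠ j →
      μ {ω | X s(i, j) ω = true} ≤ ENNReal.ofReal (β * w i * w j / ∑ k, w k)) :
    ∀ A : Finset (Fin n), A.Nonempty → ∀ j : Fin n, j ∉ A → ∀ l : ℕ, 1 ≤ l →
      μ {ω | (⨅ a ∈ A, (graphOfConfig (fun e => X e ω)).edist a j) = (l : ℕ∞)}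
        ≤ ENNReal.ofReal (β * (∑ a ∈ A, w a) * (w j / ∑ k, w k) *
            (β * ((∑ k, (w k) ^ 2) / ∑ k, w k)) ^ (l - 1)) := by
  intro A hA j _ l hl
  have hℓ : 0 < ∑ k, w k := sum_pos (fun i _ => hw i) ⟨j, mem_univ j⟩
  let c : Matrix (Fin n) (Fin n) ℝ := (β / ∑ k, w k) • Matrix.vecMulVec w w
  have hc : ∀ i j, 0 ≤ c i j := fun i j =>
    mul_nonneg (div_nonneg hβ.le hℓ.le) (mul_nonneg (hw i).le (hw j).le)
  have hq' : ∀ i j, i ≠ j → μ {ω | X s(i, j) ω = true} ≤ ENNReal.ofReal (c i j) := fun i j hij =>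
    (hq i j hij).trans_eq (congrArg ENNReal.ofReal (by
      simp only [c, Matrix.smul_apply, Matrix.vecMulVec_apply, smul_eq_mul]; ring))
  refine (measure_iInf_edist_graphOfConfig_eq_le hindep hc hq' hA j l).trans_eq (congrArg _ ?_)
  obtain ⟨k, rfl⟩ : ∃ k, l = k + 1 := ⟨l - 1, by omega⟩
  simp only [c, smul_pow, Matrix.vecMulVec_pow_succ, Matrix.smul_apply, Matrix.vecMulVec_apply,
    dotProduct, smul_eq_mul, ← mul_sum, ← sum_mul, ← sq, Nat.add_sub_cancel]
  ring

/-- Let `G` be a random graph on `[n]` with independent edges, where the edge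
`{i,j}` is present with probability `q_{ij} ≤ β w_i w_j / ℓ`, `ℓ = Σ w_i`.  With
`ν = (Σ w_k²)/ℓ`, for every nonempty `A ⊆ [n]`, `j ∉ A` and `l ≥ 1`:
`P(dist_G(A,j) = l) ≤ β (Σ_{a∈A} w_a) (w_j/ℓ) (βν)^{l−1}`, where `dist_G(A,j)` is the minimal
graph distance from `A` to `j` (as an extended natural number, `∞` if unreachable). -/
theorem stmt12 (n : ℕ) (hn : 2 ≤ n) (w : Fin n → ℝ) (hw : ∀ i, 0 < w i) (β : ℝ) (hβ : 0 < β)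
    {Ω : Type*} [MeasurableSpace Ω] (μ : Measure Ω) [IsProbabilityMeasure μ]
    (X : Sym2 (Fin n) → Ω → Bool) (hmeas : ∀ e, Measurable (X e))
    (hindep : iIndepFun
      (fun e : {e : Sym2 (Fin n) // ¬ e.IsDiag} => X e.1) μ)
    (hq : ∀ i j : Fin n, i ≠ j →
      μ {ω | X s(i, j) ω = true} ≤ ENNReal.ofReal (β * w i * w j / ∑ k, w k)) :
    ∀ A : Finset (Fin n), A.Nonempty → ∀ j : Fin n, j ∉ A → ∀ l : ℕ, 1 ≤ l →
      μ {ω | (⨅ a ∈ A, (graphOfConfig (fun e => X e ω)).edist a j) = (l : ℕ∞)}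
        ≤ ENNReal.ofReal (β * (∑ a ∈ A, w a) * (w j / ∑ k, w k) *
            (β * ((∑ k, (w k) ^ 2) / ∑ k, w k)) ^ (l - 1)) :=
  stmt12_general n w hw β hβ μ X hindep hq
end

section
/- Let m ≥ 1, let t be a tree on vertex set [m] (that is, a connected acyclic simple graph with vertex set [m]), let p be a probability mass function on [m], and let a > 0. Then Σ_{{i,j} ∈ E(t)} p_i p_j ≤ max_{v ∈ [m]} p_v, and consequently Π_{{i,j} ∈ E(t)} ( (exp(a p_i p_j) − 1)/(a p_i p_j) ) ≤ exp( a · max_{v ∈ [m]} p_v ). -/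
/-!
Root the tree anywhere. Every edge joins a vertex `w` to its parent, so
`∑_{ij ∈ E(t)} p_i p_j ≤ ∑_w p_parent(w) p_w ≤ (max p) ∑_w p_w = max p`.
The product bound follows factorwise from `(eˣ - 1)/x ≤ eˣ` for `x > 0`, which turns it into
`exp (a ∑_{ij} p_i p_j)`.
-/

open Finset

namespace Real

theorem exp_sub_one_div_le_exp {x : ℝ} (hx : 0 < x) : (exp x - 1) / x ≤ exp x := by
  rw [div_le_iff₀ hx]
  have h := mul_le_mul_of_nonneg_left (one_sub_le_exp_neg x) (exp_pos x).le
  rw [← exp_add, add_neg_cancel, exp_zero] at h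
  linarith

theorem prod_exp_sub_one_div_le_exp_sum {ι : Type*} (s : Finset ι) {x : ι → ℝ}
    (hx : ∀ i ∈ s, 0 < x i) :
    ∏ i ∈ s, (exp (x i) - 1) / x i ≤ exp (∑ i ∈ s, x i) := by
  rw [exp_sum]
  refine prod_le_prod (fun i hi => div_nonneg ?_ (hx i hi).le)
    (fun i hi => exp_sub_one_div_le_exp (hx i hi))
  exact sub_nonneg.2 (one_le_exp (hx i hi).le)

end Real

namespace SimpleGraph

variable {V : Type*} {G : SimpleGraph V}

theorem IsAcyclic.eq_penultimate_of_adj_of_dist_lt (hG : G.IsAcyclic) {r u w : V}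
    {q : G.Walk r w} (hq : q.IsPath) (hadj : G.Adj u w) (hlt : G.dist r u < G.dist r w) :
    u = q.penultimate := by
  classical
  -- A shortest path from `r` to `u` avoids `w`, so in the tree it extends through `w` to `q`.
  obtain ⟨p, hp, hlen⟩ := (q.reachable.trans hadj.symm.reachable).exists_path_of_dist
  have hw : w ∉ p.support := fun hw => hlt.not_ge <|
    calc G.dist r w ≤ (p.takeUntil w hw).length := dist_le _
      _ ≤ p.length := p.length_takeUntil_le_length hw
      _ = G.dist r u := hlen
  exact hG.eq_penultimate_of_adj_end hq hadj.symm
    (hG.mem_support_of_ne_mem_support_of_adj_of_isPath hq hp hadj.symm hw)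

theorem IsTree.exists_edgeSet_subset_range (hG : G.IsTree) :
    ∃ parent : V → V, G.edgeSet ⊆ Set.range fun w => s(parent w, w) := by
  obtain ⟨r⟩ := hG.connected.nonempty
  choose q hq using fun w => (hG.existsUnique_path r w).exists
  refine ⟨fun w => (q w).penultimate, ?_⟩
  rintro e he
  induction e using Sym2.ind with
  | _ x y =>
    rcases (hG.dist_ne_of_adj r he).lt_or_gt with hlt | hlt
    · exact ⟨y, congrArg (fun z => s(z, y))
        (hG.isAcyclic.eq_penultimate_of_adj_of_dist_lt (hq y) he hlt).symm⟩
    · refine ⟨x, (congrArg (fun z => s(z, x)) ?_).trans Sym2.eq_swap⟩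
      exact (hG.isAcyclic.eq_penultimate_of_adj_of_dist_lt (hq x) he.symm hlt).symm

theorem IsTree.sum_edge_mul_le [Fintype V] (hG : G.IsTree) {p : V → ℝ} (hp : ∀ v, 0 ≤ p v) :
    ∑ e ∈ (Set.toFinite G.edgeSet).toFinset,
        Sym2.lift ⟨fun i j => p i * p j, fun i j => mul_comm (p i) (p j)⟩ e ≤
      (⨆ v, p v) * ∑ v, p v := by
  classical
  set g : Sym2 V → ℝ := Sym2.lift ⟨fun i j => p i * p j, fun i j => mul_comm (p i) (p j)⟩
  have hg : ∀ e, 0 ≤ g e := Sym2.ind fun i j => mul_nonneg (hp i) (hp j)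
  have hM : ∀ v, p v ≤ ⨆ v, p v := le_ciSup (Set.finite_range p).bddAbove
  obtain ⟨parent, hparent⟩ := hG.exists_edgeSet_subset_range
  have hsub : (Set.toFinite G.edgeSet).toFinset ⊆ univ.image fun w => s(parent w, w) := by
    intro e he
    simpa using hparent ((Set.toFinite G.edgeSet).mem_toFinset.1 he)
  calc ∑ e ∈ (Set.toFinite G.edgeSet).toFinset, g e
      ≤ ∑ e ∈ univ.image fun w => s(parent w, w), g e :=
        sum_le_sum_of_subset_of_nonneg hsub fun e _ _ => hg e
    _ ≤ ∑ w, g s(parent w, w) := sum_image_le_of_nonneg fun e _ => hg e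
    _ ≤ ∑ w, (⨆ v, p v) * p w :=
        sum_le_sum fun w _ => mul_le_mul_of_nonneg_right (hM (parent w)) (hp w)
    _ = (⨆ v, p v) * ∑ v, p v := (mul_sum _ _ _).symm

end SimpleGraph

theorem stmt14_general (m : ℕ) (t : SimpleGraph (Fin m)) (ht : t.IsTree)
    (p : Fin m → ℝ) (hp : ∀ v, 0 < p v) (hsum : ∑ v, p v = 1) (a : ℝ) (ha : 0 < a) :
    (∑ e ∈ (Set.toFinite t.edgeSet).toFinset,
        Sym2.lift ⟨fun i j => p i * p j, fun i j => mul_comm _ _⟩ e) ≤ (⨆ v, p v) ∧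
    ((∏ e ∈ (Set.toFinite t.edgeSet).toFinset,
        (Real.exp (a * Sym2.lift ⟨fun i j => p i * p j, fun i j => mul_comm _ _⟩ e) - 1) /
          (a * Sym2.lift ⟨fun i j => p i * p j, fun i j => mul_comm _ _⟩ e))
      ≤ Real.exp (a * ⨆ v, p v)) := by
  set g : Sym2 (Fin m) → ℝ :=
    Sym2.lift ⟨fun i j => p i * p j, fun i j => mul_comm (p i) (p j)⟩
  have hsum_le : ∑ e ∈ (Set.toFinite t.edgeSet).toFinset, g e ≤ ⨆ v, p v := by
    simpa [hsum] using ht.sum_edge_mul_le fun v => (hp v).le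
  refine ⟨hsum_le, ?_⟩
  have hpos : ∀ e ∈ (Set.toFinite t.edgeSet).toFinset, 0 < a * g e := fun e _ =>
    mul_pos ha (Sym2.ind (fun i j => mul_pos (hp i) (hp j)) e)
  calc _ ≤ Real.exp (∑ e ∈ (Set.toFinite t.edgeSet).toFinset, a * g e) :=
        Real.prod_exp_sub_one_div_le_exp_sum _ hpos
    _ ≤ Real.exp (a * ⨆ v, p v) := by
        rw [← mul_sum]
        exact Real.exp_le_exp.2 (mul_le_mul_of_nonneg_left hsum_le ha.le)

/-- Let `t` be a tree on vertex set `[m]`, `p` a probability mass function on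
`[m]`, and `a > 0`.  Then `Σ_{{i,j} ∈ E(t)} p_i p_j ≤ max_v p_v`, and consequently
`Π_{{i,j} ∈ E(t)} (exp(a p_i p_j) − 1)/(a p_i p_j) ≤ exp(a max_v p_v)`. -/
theorem stmt14 (m : ℕ) (hm : 1 ≤ m) (t : SimpleGraph (Fin m)) (ht : t.IsTree)
    (p : Fin m → ℝ) (hp : ∀ v, 0 < p v) (hsum : ∑ v, p v = 1) (a : ℝ) (ha : 0 < a) :
    (∑ e ∈ (Set.toFinite t.edgeSet).toFinset,
        Sym2.lift ⟨fun i j => p i * p j, fun i j => mul_comm _ _⟩ e) ≤ (⨆ v, p v) ∧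
    ((∏ e ∈ (Set.toFinite t.edgeSet).toFinset,
        (Real.exp (a * Sym2.lift ⟨fun i j => p i * p j, fun i j => mul_comm _ _⟩ e) - 1) /
          (a * Sym2.lift ⟨fun i j => p i * p j, fun i j => mul_comm _ _⟩ e))
      ≤ Real.exp (a * ⨆ v, p v)) :=
  stmt14_general m t ht p hp hsum a ha
end

section
/- Fix τ ∈ (3,4) and set η := (τ−3)/(τ−1). For every δ > 0 and every C > 0 there exist constants c_δ < ∞ and C′ > 0 such that for all ε ∈ (0,1]: ε^{−1/(τ−3)} Σ_{i > ε^{−δ−1/η}} i^{−1/(τ−1)} exp( −C ε i^{η} ) ≤ c_δ exp( −C′ ε^{−δη} ). -/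
/-!
Put `p = δ + 1/η`, so the sum runs over `i > ε^(-p)`, i.e. over `i` with `i^(-1/p) < ε`.
For such `i` the prefactor is `ε^(-1/(τ-3)) ≤ i^(1/(p(τ-3)))`, while `ε i^η` dominates both
`i^(η - 1/p)` (a positive power, since `pη = δη + 1`) and `ε (ε^(-p))^η = ε^(-δη)`.
Splitting `exp(-C ε i^η)` into two halves, one half yields `exp(-(C/2) ε^(-δη))` and the other,
together with the prefactor, a summable weight `i^s exp(-(C/2) i^(η - 1/p))` independent of `ε`,
whose sum is `c_δ`.
-/

open Real Filter Asymptotics Topology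

lemma summable_rpow_mul_exp_neg_mul_rpow (s : ℝ) {a c : ℝ} (ha : 0 < a) (hc : 0 < c) :
    Summable fun n : ℕ => (n : ℝ) ^ s * exp (-c * (n : ℝ) ^ a) := by
  have hlim : Tendsto (fun n : ℕ => ((n : ℝ) ^ a) ^ ((s + 2) / a) * exp (-c * (n : ℝ) ^ a))
      atTop (𝓝 0) :=
    (tendsto_rpow_mul_exp_neg_mul_atTop_nhds_zero _ _ hc).comp
      ((tendsto_rpow_atTop ha).comp tendsto_natCast_atTop_atTop)
  refine summable_of_isBigO_nat (summable_nat_rpow.mpr (by norm_num : (-2 : ℝ) < -1)) ?_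
  refine ((hlim.isBigO_one ℝ).mul (isBigO_refl (fun n : ℕ => (n : ℝ) ^ (-2 : ℝ)) atTop)).congr'
    ?_ (by simp)
  filter_upwards [eventually_gt_atTop 0] with n hn
  have hn : (0 : ℝ) < n := by exact_mod_cast hn
  rw [← rpow_mul hn.le, mul_div_cancel₀ _ ha.ne', mul_right_comm, ← rpow_add hn]
  ring_nf

lemma rpow_neg_inv_lt_of_rpow_neg_lt {p ε x : ℝ} (hp : 0 < p) (hε : 0 < ε) (hx : ε ^ (-p) < x) :
    x ^ (-p⁻¹) < ε :=
  calc x ^ (-p⁻¹) < (ε ^ (-p)) ^ (-p⁻¹) :=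
        rpow_lt_rpow_of_neg (rpow_pos_of_pos hε _) hx (neg_neg_of_pos (inv_pos.mpr hp))
    _ = ε := by rw [← rpow_mul hε.le, neg_mul_neg, mul_inv_cancel₀ hp.ne', rpow_one]

lemma rpow_mul_exp_le_of_rpow_neg_lt {κ p η β C ε x : ℝ} (hκ : 0 ≤ κ) (hp : 0 < p) (hη : 0 ≤ η)
    (hC : 0 ≤ C) (hε : 0 < ε) (hx : ε ^ (-p) < x) :
    ε ^ (-κ) * (x ^ (-β) * exp (-C * ε * x ^ η)) ≤
      x ^ (κ / p - β) * exp (-(C / 2) * x ^ (η - p⁻¹)) * exp (-(C / 2) * ε ^ (1 - p * η)) := by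
  have hx0 : 0 < x := (rpow_pos_of_pos hε _).trans hx
  have hεx := rpow_neg_inv_lt_of_rpow_neg_lt hp hε hx
  have hprefactor : ε ^ (-κ) ≤ x ^ (κ / p) :=
    calc ε ^ (-κ) ≤ (x ^ (-p⁻¹)) ^ (-κ) :=
          rpow_le_rpow_of_nonpos (rpow_pos_of_pos hx0 _) hεx.le (neg_nonpos.mpr hκ)
      _ = x ^ (κ / p) := by rw [← rpow_mul hx0.le]; ring_nf
  have hdecay : x ^ (η - p⁻¹) ≤ ε * x ^ η :=
    calc x ^ (η - p⁻¹) = x ^ (-p⁻¹) * x ^ η := by rw [← rpow_add hx0]; ring_nf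
      _ ≤ ε * x ^ η := by gcongr
  have hthreshold : ε ^ (1 - p * η) ≤ ε * x ^ η :=
    calc ε ^ (1 - p * η) = ε * (ε ^ (-p)) ^ η := by
          rw [← rpow_mul hε.le, neg_mul, sub_eq_add_neg, rpow_add hε, rpow_one]
      _ ≤ ε * x ^ η := by gcongr
  have hsplit : exp (-C * ε * x ^ η) ≤
      exp (-(C / 2) * x ^ (η - p⁻¹)) * exp (-(C / 2) * ε ^ (1 - p * η)) := by
    rw [← exp_add, exp_le_exp]
    nlinarith [mul_le_mul_of_nonneg_left hdecay hC, mul_le_mul_of_nonneg_left hthreshold hC]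
  calc ε ^ (-κ) * (x ^ (-β) * exp (-C * ε * x ^ η))
      ≤ x ^ (κ / p) * (x ^ (-β) * (exp (-(C / 2) * x ^ (η - p⁻¹)) *
          exp (-(C / 2) * ε ^ (1 - p * η)))) := by gcongr
    _ = _ := by rw [sub_eq_add_neg (κ / p), rpow_add hx0]; ring

theorem stmt15_general (τ : ℝ) (hτ1 : 3 < τ) (δ C : ℝ) (hδ : 0 < δ) (hC : 0 < C) :
    ∃ cδ C' : ℝ, 0 < C' ∧ ∀ ε : ℝ, 0 < ε → ε ≤ 1 →
      ε ^ (-(1 / (τ - 3))) *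
        ∑' i : ℕ, (if ε ^ (-δ - (τ - 1) / (τ - 3)) < (i : ℝ) then
          (i : ℝ) ^ (-(1 / (τ - 1))) * Real.exp (-C * ε * (i : ℝ) ^ ((τ - 3) / (τ - 1)))
          else 0)
      ≤ cδ * Real.exp (-C' * ε ^ (-(δ * ((τ - 3) / (τ - 1))))) := by
  have hτ3 : 0 < τ - 3 := by linarith
  have hτ1' : 0 < τ - 1 := by linarith
  set η := (τ - 3) / (τ - 1)
  set p := δ + (τ - 1) / (τ - 3)
  have hη : 0 < η := by positivity
  have hp : 0 < p := by positivity
  have hpη : p * η = δ * η + 1 := by simp only [p, η]; field_simp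
  have ha : 0 < η - p⁻¹ := by
    rw [sub_pos, inv_lt_iff_one_lt_mul₀' hp, hpη]
    exact lt_add_of_pos_left _ (mul_pos hδ hη)
  set s := 1 / (τ - 3) / p - 1 / (τ - 1)
  have hsum := summable_rpow_mul_exp_neg_mul_rpow s ha (half_pos hC)
  refine ⟨∑' n : ℕ, (n : ℝ) ^ s * exp (-(C / 2) * (n : ℝ) ^ (η - p⁻¹)), C / 2, half_pos hC,
    fun ε hε _ => ?_⟩
  have hbound : ∀ i : ℕ, ε ^ (-(1 / (τ - 3))) *
      (if ε ^ (-δ - (τ - 1) / (τ - 3)) < (i : ℝ) then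
        (i : ℝ) ^ (-(1 / (τ - 1))) * exp (-C * ε * (i : ℝ) ^ η) else 0) ≤
      (i : ℝ) ^ s * exp (-(C / 2) * (i : ℝ) ^ (η - p⁻¹)) * exp (-(C / 2) * ε ^ (-(δ * η))) := by
    intro i
    split_ifs with hi
    · rw [show -δ - (τ - 1) / (τ - 3) = -p by ring] at hi
      have := rpow_mul_exp_le_of_rpow_neg_lt (κ := 1 / (τ - 3)) (β := 1 / (τ - 1))
        (by positivity) hp hη.le hC.le hε hi
      rwa [show 1 - p * η = -(δ * η) by linarith] at this
    · rw [mul_zero]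
      positivity
  rw [← tsum_mul_left, ← tsum_mul_right]
  refine Summable.tsum_le_tsum hbound ?_ ?_
  · exact (hsum.mul_right _).of_nonneg_of_le (fun i => by split_ifs <;> positivity) hbound
  · exact hsum.mul_right _

/-- Fix `τ ∈ (3,4)` and set `η = (τ−3)/(τ−1)`.  For every `δ > 0` and `C > 0`
there exist constants `c_δ < ∞` and `C′ > 0` such that for all `ε ∈ (0,1]`:
`ε^{−1/(τ−3)} Σ_{i > ε^{−δ−1/η}} i^{−1/(τ−1)} exp(−C ε i^η) ≤ c_δ exp(−C′ ε^{−δη})`,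
where the sum runs over the integers `i` exceeding `ε^{−δ−1/η}` (note `1/η = (τ−1)/(τ−3)`). -/
theorem stmt15 (τ : ℝ) (hτ1 : 3 < τ) (hτ2 : τ < 4) (δ C : ℝ) (hδ : 0 < δ) (hC : 0 < C) :
    ∃ cδ C' : ℝ, 0 < C' ∧ ∀ ε : ℝ, 0 < ε → ε ≤ 1 →
      ε ^ (-(1 / (τ - 3))) *
        ∑' i : ℕ, (if ε ^ (-δ - (τ - 1) / (τ - 3)) < (i : ℝ) then
          (i : ℝ) ^ (-(1 / (τ - 1))) * Real.exp (-C * ε * (i : ℝ) ^ ((τ - 3) / (τ - 1)))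
          else 0)
      ≤ cδ * Real.exp (-C' * ε ^ (-(δ * ((τ - 3) / (τ - 1))))) :=
  stmt15_general τ hτ1 δ C hδ hC
end
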